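/- arXiv:1401.1804 — 12 statements merged into one kernel-verified Lean document; each statement's English description precedes it below -/
import Mathlib

section
/- Let T be a compact Hausdorff space equipped with a Radon measure μ, let A, B : T → M_n(ℂ) be continuous maps (written t ↦ A_t and t ↦ B_t) such that (A_t − A_s) ∘ (B_t − B_s) ≥ 0 for all s, t ∈ T (the synchronous Hadamard property), and let α : T → [0, ∞) be a measurable function with ∫_T α dμ < ∞. Then (∫_T α(s) dμ(s)) · ∫_T α(t)(A_t ∘ B_t) dμ(t) ≥ (∫_T α(t) A_t dμ(t)) ∘ (∫_T α(s) B_s dμ(s)), i.e., the difference of the two sides is a positive semidefinite matrix. -/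
/-!
Write `c = ∫ α`. Expanding `(A t - A s) ⊙ (B t - B s)` and integrating against `α s * α t`,
first in `t` and then in `s`, gives
`2 • (c • ∫ α • (A ⊙ B) - (∫ α • A) ⊙ (∫ α • B)) = ∫ₛ ∫ₜ (α s * α t) • ((A t - A s) ⊙ (B t - B s))`,
an iterated integral of positive semidefinite matrices. These form a closed convex cone, so the
integral is positive semidefinite.
-/

open scoped Matrix ComplexOrder
open MeasureTheory

attribute [local instance] Matrix.normedAddCommGroup Matrix.normedSpace

theorem MeasureTheory.Integrable.smul_of_continuous {T E : Type*} [TopologicalSpace T]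
    [CompactSpace T] [MeasurableSpace T] [OpensMeasurableSpace T] {μ : Measure T}
    [NormedAddCommGroup E] [NormedSpace ℝ E] {φ : T → ℝ} {f : T → E}
    (hφ : Integrable φ μ) (hf : Continuous f) : Integrable (fun t => φ t • f t) μ :=
  hφ.smul_of_top_left (hf.memLp_top_of_hasCompactSupport (.of_compactSpace f) μ)

theorem Continuous.matrix_hadamard {X m n R : Type*} [TopologicalSpace X] [TopologicalSpace R]
    [Mul R] [ContinuousMul R] {A B : X → Matrix m n R} (hA : Continuous A) (hB : Continuous B) :
    Continuous fun x => A x ⊙ B x :=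
  continuous_matrix fun i j => (hA.matrix_elem i j).mul (hB.matrix_elem i j)

namespace Matrix

variable {m n 𝕜 : Type*} [Fintype m] [Fintype n] [RCLike 𝕜]

/- The product topology on matrices agrees with the topology of the sup norm only up to
unfolding, so instance search does not find this instance on its own. -/
noncomputable instance : ContinuousENorm (Matrix m n 𝕜) := SeminormedAddGroup.toContinuousENorm

theorem isClosed_setOf_posSemidef : IsClosed {A : Matrix n n 𝕜 | A.PosSemidef} := by
  simp only [posSemidef_iff_dotProduct_mulVec, Set.ofPred_and, Set.ofPred_forall]
  refine (isClosed_eq (by fun_prop) continuous_id).inter (isClosed_iInter fun x => ?_)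
  exact isClosed_le continuous_const (by fun_prop)

variable (m n 𝕜) in
noncomputable def hadamardBilinear : Matrix m n 𝕜 →ₗ[𝕜] Matrix m n 𝕜 →ₗ[𝕜] Matrix m n 𝕜 :=
  LinearMap.mk₂ 𝕜 (· ⊙ ·) (fun A B C => add_hadamard C A B) (fun c A B => smul_hadamard A B c)
    (fun A B C => hadamard_add A B C) (fun c A B => hadamard_smul A B c)

variable {T : Type*} [MeasurableSpace T] {μ : Measure T}

open scoped MatrixOrder in
theorem PosSemidef.integral {f : T → Matrix n n 𝕜} (hf : ∀ t, (f t).PosSemidef) :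
    (∫ t, f t ∂μ).PosSemidef := by
  have : ClosedIciTopology (Matrix n n 𝕜) :=
    ⟨fun a => isClosed_setOf_posSemidef.preimage (continuous_sub_right a)⟩
  -- `this` lives on the product topology, `integral_nonneg` asks for the normed one
  exact nonneg_iff_posSemidef.mp (@integral_nonneg _ _ _ _ _ _ _ _ _ this _ fun t => (hf t).nonneg)

variable {f : T → Matrix m n 𝕜}

theorem _root_.MeasureTheory.Integrable.const_hadamard (hf : Integrable f μ)
    (X : Matrix m n 𝕜) : Integrable (fun t => X ⊙ f t) μ :=
  (hadamardBilinear m n 𝕜 X).toContinuousLinearMap.integrable_comp hf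

theorem _root_.MeasureTheory.Integrable.hadamard_const (hf : Integrable f μ)
    (Y : Matrix m n 𝕜) : Integrable (fun t => f t ⊙ Y) μ :=
  ((hadamardBilinear m n 𝕜).flip Y).toContinuousLinearMap.integrable_comp hf

theorem integral_const_hadamard (hf : Integrable f μ) (X : Matrix m n 𝕜) :
    ∫ t, X ⊙ f t ∂μ = X ⊙ ∫ t, f t ∂μ :=
  (hadamardBilinear m n 𝕜 X).toContinuousLinearMap.integral_comp_comm hf

theorem integral_hadamard_const (hf : Integrable f μ) (Y : Matrix m n 𝕜) :
    ∫ t, f t ⊙ Y ∂μ = (∫ t, f t ∂μ) ⊙ Y :=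
  ((hadamardBilinear m n 𝕜).flip Y).toContinuousLinearMap.integral_comp_comm hf

end Matrix

section WeightedHadamard

variable {T m n 𝕜 : Type*} [MeasurableSpace T] {μ : Measure T} [Fintype m] [Fintype n]
  [RCLike 𝕜] {α : T → ℝ} {A B : T → Matrix m n 𝕜}
  (hα : Integrable α μ) (hA : Integrable (fun t => α t • A t) μ)
  (hB : Integrable (fun t => α t • B t) μ) (hAB : Integrable (fun t => α t • (A t ⊙ B t)) μ)
include hα hA hB hAB

theorem integral_smul_affine_hadamard (X Y Z : Matrix m n 𝕜) (r : ℝ) :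
    ∫ t, α t • (Z - X ⊙ B t - A t ⊙ Y + r • (A t ⊙ B t)) ∂μ =
      (∫ t, α t ∂μ) • Z - X ⊙ (∫ t, α t • B t ∂μ) - (∫ t, α t • A t ∂μ) ⊙ Y +
        r • ∫ t, α t • (A t ⊙ B t) ∂μ := by
  have hpt : ∀ t, α t • (Z - X ⊙ B t - A t ⊙ Y + r • (A t ⊙ B t)) =
      α t • Z - X ⊙ (α t • B t) - (α t • A t) ⊙ Y + r • (α t • (A t ⊙ B t)) := fun t => by
    rw [smul_add, smul_sub, smul_sub, Matrix.hadamard_smul, Matrix.smul_hadamard, smul_comm r]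
  have hZX : Integrable (fun t => α t • Z - X ⊙ (α t • B t)) μ :=
    (hα.smul_const Z).sub (hB.const_hadamard X)
  have hZXY : Integrable (fun t => α t • Z - X ⊙ (α t • B t) - (α t • A t) ⊙ Y) μ :=
    hZX.sub (hA.hadamard_const Y)
  simp_rw [hpt]
  rw [integral_add (g := fun t => r • (α t • (A t ⊙ B t))) hZXY (hAB.smul r),
    integral_sub hZX (hA.hadamard_const Y), integral_sub (hα.smul_const Z) (hB.const_hadamard X),
    integral_smul_const, Matrix.integral_const_hadamard hB, Matrix.integral_hadamard_const hA,
    integral_smul]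

theorem integral_smul_sub_hadamard_sub (X Y : Matrix m n 𝕜) :
    ∫ t, α t • ((A t - X) ⊙ (B t - Y)) ∂μ =
      ∫ t, α t • (A t ⊙ B t) ∂μ - (∫ t, α t • A t ∂μ) ⊙ Y - X ⊙ (∫ t, α t • B t ∂μ) +
        (∫ t, α t ∂μ) • (X ⊙ Y) := by
  have hpt : ∀ t, (A t - X) ⊙ (B t - Y) = X ⊙ Y - X ⊙ B t - A t ⊙ Y + (1 : ℝ) • (A t ⊙ B t) :=
    fun t => by
      ext i j
      simp only [Matrix.hadamard_apply, Matrix.sub_apply, Matrix.add_apply, one_smul]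
      ring
  simp_rw [hpt]
  rw [integral_smul_affine_hadamard hα hA hB hAB, one_smul]
  abel

theorem two_smul_chebyshev_defect_eq_integral :
    (2 : ℝ) • ((∫ s, α s ∂μ) • (∫ t, α t • (A t ⊙ B t) ∂μ) -
      (∫ t, α t • A t ∂μ) ⊙ (∫ s, α s • B s ∂μ)) =
      ∫ s, α s • ∫ t, α t • ((A t - A s) ⊙ (B t - B s)) ∂μ ∂μ := by
  simp_rw [integral_smul_sub_hadamard_sub hα hA hB hAB,
    integral_smul_affine_hadamard hα hA hB hAB]
  module

end WeightedHadamard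

theorem chebyshev_hadamard_integral_general {n : ℕ} {T : Type*} [TopologicalSpace T] [CompactSpace T]
    [MeasurableSpace T] [BorelSpace T] (μ : Measure T)
    (A B : T → Matrix (Fin n) (Fin n) ℂ) (hA : Continuous A) (hB : Continuous B)
    (hsync : ∀ s t : T, ((A t - A s) ⊙ (B t - B s)).PosSemidef)
    (α : T → ℝ) (hα0 : ∀ t, 0 ≤ α t) (hαi : Integrable α μ) :
    ((∫ s, α s ∂μ) • (∫ t, α t • (A t ⊙ B t) ∂μ) -
      (∫ t, α t • A t ∂μ) ⊙ (∫ s, α s • B s ∂μ)).PosSemidef := by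
  have hdouble := two_smul_chebyshev_defect_eq_integral hαi (hαi.smul_of_continuous hA)
    (hαi.smul_of_continuous hB) (hαi.smul_of_continuous (hA.matrix_hadamard hB))
  have hpos : ((2 : ℝ) • ((∫ s, α s ∂μ) • (∫ t, α t • (A t ⊙ B t) ∂μ) -
      (∫ t, α t • A t ∂μ) ⊙ (∫ s, α s • B s ∂μ))).PosSemidef := by
    rw [hdouble]
    exact Matrix.PosSemidef.integral fun s =>
      (Matrix.PosSemidef.integral fun t => (hsync s t).smul (hα0 t)).smul (hα0 s)
  simpa using hpos.smul (inv_nonneg.mpr zero_le_two : (0 : ℝ) ≤ 2⁻¹)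

/-- Chebyshev inequality for the Hadamard product of continuous fields of matrices over a
compact Hausdorff space with a Radon measure, assuming the synchronous Hadamard property. -/
theorem chebyshev_hadamard_integral {n : ℕ} {T : Type*} [TopologicalSpace T] [CompactSpace T]
    [T2Space T] [MeasurableSpace T] [BorelSpace T] (μ : Measure T) [μ.Regular]
    (A B : T → Matrix (Fin n) (Fin n) ℂ) (hA : Continuous A) (hB : Continuous B)
    (hsync : ∀ s t : T, ((A t - A s) ⊙ (B t - B s)).PosSemidef)
    (α : T → ℝ) (hα0 : ∀ t, 0 ≤ α t) (hαm : Measurable α) (hαi : Integrable α μ) :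
    ((∫ s, α s ∂μ) • (∫ t, α t • (A t ⊙ B t) ∂μ) -
      (∫ t, α t • A t ∂μ) ⊙ (∫ s, α s • B s ∂μ)).PosSemidef :=
  chebyshev_hadamard_integral_general μ A B hA hB hsync α hα0 hαi
end

section
/- Let A_1 ≥ A_2 ≥ ⋯ ≥ A_n and B_1 ≥ B_2 ≥ ⋯ ≥ B_n be Hermitian n×n complex matrices (decreasing in the positive semidefinite (Loewner) order) and let ω_1, …, ω_n be positive real numbers. Then (Σ_{j=1}^n ω_j) · Σ_{j=1}^n ω_j (A_j ∘ B_j) ≥ (Σ_{j=1}^n ω_j A_j) ∘ (Σ_{j=1}^n ω_j B_j), i.e., the difference of the two sides is positive semidefinite. -/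
/-!
The weighted Chebyshev identity
`2 (W ∑ ω_j A_j ∘ B_j - (∑ ω_j A_j) ∘ (∑ ω_j B_j)) = ∑_{i,j} ω_i ω_j (A_i - A_j) ∘ (B_i - B_j)`,
with `W = ∑ ω_j`, holds entrywise as an identity of scalars. Since the two sequences decrease in
the same direction, `A_i - A_j` and `B_i - B_j` are both positive semidefinite or both negative
semidefinite, so by the Schur product theorem every summand on the right is positive semidefinite.
-/

open scoped Matrix ComplexOrder
open Finset Matrix

theorem sum_sum_mul_sub_mul_sub {R ι : Type*} [CommRing R] (s : Finset ι) (w a b : ι → R) :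
    ∑ i ∈ s, ∑ j ∈ s, w i * w j * ((a i - a j) * (b i - b j)) =
      2 * ((∑ j ∈ s, w j) * ∑ j ∈ s, w j * (a j * b j) -
        (∑ j ∈ s, w j * a j) * ∑ j ∈ s, w j * b j) := by
  have expand : ∀ i j, w i * w j * ((a i - a j) * (b i - b j)) =
      w i * (w j * (a j * b j)) + w j * (w i * (a i * b i)) -
        (w i * a i * (w j * b j) + w j * a j * (w i * b i)) := fun i j => by ring
  simp only [expand, sum_sub_distrib, sum_add_distrib, ← mul_sum, ← sum_mul]
  ring

theorem Matrix.sum_sum_smul_sub_hadamard_sub {S R ι m : Type*} [CommRing S] [CommRing R]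
    [Algebra S R] (s : Finset ι) (w : ι → S) (A B : ι → Matrix m m R) :
    ∑ i ∈ s, ∑ j ∈ s, (w i * w j) • ((A i - A j) ⊙ (B i - B j)) =
      (2 : S) • ((∑ j ∈ s, w j) • ∑ j ∈ s, w j • (A j ⊙ B j) -
        (∑ j ∈ s, w j • A j) ⊙ (∑ j ∈ s, w j • B j)) := by
  ext k l
  simpa only [sum_apply, sub_apply, smul_apply, hadamard_apply, Algebra.smul_def, map_mul,
    map_sum, map_ofNat] using
    sum_sum_mul_sub_mul_sub s (algebraMap S R <| w ·) (A · k l) (B · k l)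

theorem Matrix.PosSemidef.sub_hadamard_sub_of_antitone {𝕜 ι m : Type*} [RCLike 𝕜]
    [LinearOrder ι] {A B : ι → Matrix m m 𝕜}
    (hA : ∀ i j, i ≤ j → (A i - A j).PosSemidef) (hB : ∀ i j, i ≤ j → (B i - B j).PosSemidef)
    (i j : ι) : ((A i - A j) ⊙ (B i - B j)).PosSemidef := by
  rcases le_total i j with hij | hji
  · exact (hA i j hij).hadamard (hB i j hij)
  · have swap : (A i - A j) ⊙ (B i - B j) = (A j - A i) ⊙ (B j - B i) := by
      ext k l
      simp only [hadamard_apply, sub_apply]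
      ring
    exact swap ▸ (hA j i hji).hadamard (hB j i hji)

theorem chebyshev_hadamard_discrete_general {n : ℕ} (A B : Fin n → Matrix (Fin n) (Fin n) ℂ)
    (hAdec : ∀ i j, i ≤ j → (A i - A j).PosSemidef)
    (hBdec : ∀ i j, i ≤ j → (B i - B j).PosSemidef)
    (ω : Fin n → ℝ) (hω : ∀ j, 0 < ω j) :
    ((∑ j, ω j) • ∑ j, ω j • (A j ⊙ B j) -
      (∑ j, ω j • A j) ⊙ (∑ j, ω j • B j)).PosSemidef := by
  have hsum : (∑ i, ∑ j, (ω i * ω j) • ((A i - A j) ⊙ (B i - B j))).PosSemidef :=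
    posSemidef_sum _ fun i _ => posSemidef_sum _ fun j _ =>
      (PosSemidef.sub_hadamard_sub_of_antitone hAdec hBdec i j).smul
        (mul_nonneg (hω i).le (hω j).le)
  rw [sum_sum_smul_sub_hadamard_sub] at hsum
  simpa only [inv_smul_smul₀ (two_ne_zero' ℝ)] using
    hsum.smul (inv_nonneg.mpr zero_le_two : (0 : ℝ) ≤ 2⁻¹)

/-- Discrete Chebyshev inequality for the Hadamard product: if `A_1 ≥ ⋯ ≥ A_n` and
`B_1 ≥ ⋯ ≥ B_n` are Hermitian matrices (decreasing in the Loewner order) and the `ω_j` are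
positive weights, then
`(∑ ω_j) • ∑ ω_j (A_j ∘ B_j) ≥ (∑ ω_j A_j) ∘ (∑ ω_j B_j)`. -/
theorem chebyshev_hadamard_discrete {n : ℕ} (A B : Fin n → Matrix (Fin n) (Fin n) ℂ)
    (hAherm : ∀ j, (A j).IsHermitian) (hBherm : ∀ j, (B j).IsHermitian)
    (hAdec : ∀ i j, i ≤ j → (A i - A j).PosSemidef)
    (hBdec : ∀ i j, i ≤ j → (B i - B j).PosSemidef)
    (ω : Fin n → ℝ) (hω : ∀ j, 0 < ω j) :
    ((∑ j, ω j) • ∑ j, ω j • (A j ⊙ B j) -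
      (∑ j, ω j • A j) ⊙ (∑ j, ω j • B j)).PosSemidef :=
  chebyshev_hadamard_discrete_general A B hAdec hBdec ω hω
end

section
/- Let A_n ≥ ⋯ ≥ A_1 > 0 and B_n ≥ ⋯ ≥ B_1 > 0 be positive definite n×n complex matrices (increasing in the Loewner order) and let ω_1, …, ω_n be positive real numbers. Then for every μ ∈ [0,1], (Σ_{j=1}^n ω_j) · Σ_{j=1}^n ω_j (A_j ∘ B_j) ≥ (Σ_{j=1}^n ω_j (A_j ♯_μ B_j)) ∘ (Σ_{j=1}^n ω_j (A_j ♯_{1−μ} B_j)), i.e., the difference of the two sides is positive semidefinite. -/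
open scoped Matrix ComplexOrder

/-- The weighted matrix geometric mean `A ♯_μ B = A^{1/2} (A^{-1/2} B A^{-1/2})^μ A^{1/2}`,
defined via the continuous functional calculus for Hermitian matrices. -/
noncomputable def geomMean {n : ℕ} (t : ℝ) (A B : Matrix (Fin n) (Fin n) ℂ) :
    Matrix (Fin n) (Fin n) ℂ :=
  cfc Real.sqrt A *
    cfc (fun x : ℝ => x ^ t)
      (cfc (fun x : ℝ => (Real.sqrt x)⁻¹) A * B * cfc (fun x : ℝ => (Real.sqrt x)⁻¹) A) *
    cfc Real.sqrt A

/-!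
Conjugating by `A^{1/2}` and diagonalising `A^{-1/2} B A^{-1/2} = U diag(e) U*` gives, with
`M = A^{1/2} U`, the simultaneous form `A = M M*`, `B = M diag(e) M*`, `A ♯_t B = M diag(e^t) M*`.
The Hadamard product of two such congruences is a principal compression of the Kronecker
congruence of a diagonal, so weighted AM-GM `e^μ f^(1-μ) ≤ μ e + (1-μ) f` on that diagonal gives
`(A ♯_μ B) ∘ (C ♯_{1-μ} D) ≤ μ (B ∘ C) + (1-μ) (A ∘ D)`. For `j ≤ k`, two instances of this plus
the Schur-positive term `(A_k - A_j) ∘ (B_k - B_j)` bound the cross terms of the pair `(j, k)`,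
and the Chebyshev-type difference is half the weighted sum of these pairwise differences.
-/

open Matrix
open scoped Kronecker MatrixOrder

section Hadamard

variable {ι m n α : Type*} [NonUnitalNonAssocSemiring α]

lemma Matrix.sum_hadamard (s : Finset ι) (A : ι → Matrix m n α)
    (B : Matrix m n α) : (∑ i ∈ s, A i) ⊙ B = ∑ i ∈ s, A i ⊙ B := by
  ext; simp only [hadamard_apply, sum_apply, Finset.sum_mul]

lemma Matrix.hadamard_sum (s : Finset ι) (A : Matrix m n α)
    (B : ι → Matrix m n α) : A ⊙ ∑ i ∈ s, B i = ∑ i ∈ s, A ⊙ B i := by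
  ext; simp only [hadamard_apply, sum_apply, Finset.mul_sum]

end Hadamard

section RCLike

variable {m 𝕜 : Type*} [RCLike 𝕜]

lemma Matrix.hadamard_conj_diagonal_eq_submatrix_kronecker {k l : Type*}
    [Fintype k] [Fintype l] [DecidableEq k] [DecidableEq l]
    (M : Matrix m k 𝕜) (N : Matrix m l 𝕜) (a : k → 𝕜) (b : l → 𝕜) :
    (M * diagonal a * Mᴴ) ⊙ (N * diagonal b * Nᴴ) =
      ((M ⊗ₖ N) * diagonal (fun pq : k × l => a pq.1 * b pq.2) * (M ⊗ₖ N)ᴴ).submatrix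
        (fun i => (i, i)) (fun i => (i, i)) := by
  rw [conjTranspose_kronecker, ← diagonal_kronecker_diagonal, ← mul_kronecker_mul,
    ← mul_kronecker_mul]
  -- `X ⊙ Y` is definitionally the restriction of `X ⊗ₖ Y` to the diagonal pairs `(i, i)`.
  rfl

lemma hadamard_sum_smul_le_of_pairwise {ι : Type*} [Fintype ι] [LinearOrder ι]
    (ω : ι → ℝ) (hω : ∀ j, 0 ≤ ω j) (X G H : ι → Matrix m m 𝕜)
    (h : ∀ j k, j ≤ k → G j ⊙ H k + G k ⊙ H j ≤ X j + X k) :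
    (∑ j, ω j • G j) ⊙ (∑ j, ω j • H j) ≤ (∑ j, ω j) • ∑ j, ω j • X j := by
  set D := ∑ j, ∑ k, (ω j * ω k) • (X k - G j ⊙ H k)
  have hD : (∑ j, ω j) • ∑ j, ω j • X j - (∑ j, ω j • G j) ⊙ (∑ j, ω j • H j) = D := by
    rw [Finset.sum_smul, sum_hadamard]
    simp only [hadamard_sum, smul_hadamard, hadamard_smul, Finset.smul_sum,
      smul_smul, ← Finset.sum_sub_distrib, smul_sub, D]
    exact Finset.sum_congr rfl fun j _ => Finset.sum_congr rfl fun k _ => by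
      rw [mul_comm (ω k)]
  have hDD : D + D = ∑ j, ∑ k, (ω j * ω k) • (X j + X k - (G j ⊙ H k + G k ⊙ H j)) := by
    have hswap : D = ∑ j, ∑ k, (ω j * ω k) • (X j - G k ⊙ H j) := by
      rw [Finset.sum_comm]
      exact Finset.sum_congr rfl fun j _ => Finset.sum_congr rfl fun k _ => by rw [mul_comm]
    nth_rewrite 2 [hswap]
    simp only [D, ← Finset.sum_add_distrib, ← smul_add]
    congr! 3 with j - k -
    abel
  have hpair : ∀ j k, G j ⊙ H k + G k ⊙ H j ≤ X j + X k := fun j k =>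
    (le_total j k).elim (h j k) fun hkj => by simpa only [add_comm] using h k j hkj
  have hDD_nonneg : 0 ≤ D + D := by
    rw [hDD]
    refine Finset.sum_nonneg fun j _ => Finset.sum_nonneg fun k _ => ?_
    exact ((sub_nonneg.2 (hpair j k)).posSemidef.smul (mul_nonneg (hω j) (hω k))).nonneg
  have hhalf : D = (1 / 2 : ℝ) • (D + D) := by rw [← two_smul ℝ D, smul_smul]; norm_num
  rw [← sub_nonneg, hD, hhalf]
  exact (hDD_nonneg.posSemidef.smul (by norm_num : (0 : ℝ) ≤ 1 / 2)).nonneg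

variable [Fintype m] [DecidableEq m]

lemma Matrix.PosSemidef.cfc_sqrt_mul_self {A : Matrix m m 𝕜} (hA : A.PosSemidef) :
    cfc Real.sqrt A * cfc Real.sqrt A = A := by
  have hA' : IsSelfAdjoint A := hA.isHermitian
  rw [← cfc_mul Real.sqrt Real.sqrt A]
  refine (cfc_congr fun x hx => Real.mul_self_sqrt ?_).trans (cfc_id' ℝ A)
  obtain ⟨i, rfl⟩ := hA.isHermitian.spectrum_real_eq_range_eigenvalues ▸ hx
  exact hA.eigenvalues_nonneg i

lemma Matrix.PosDef.cfc_sqrt_mul_cfc_inv_sqrt {A : Matrix m m 𝕜} (hA : A.PosDef) :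
    cfc Real.sqrt A * cfc (fun x : ℝ => (Real.sqrt x)⁻¹) A = 1 := by
  have hA' : IsSelfAdjoint A := hA.isHermitian
  rw [← cfc_mul _ _ A (A.finite_real_spectrum.continuousOn _)
    (A.finite_real_spectrum.continuousOn _), ← cfc_const_one ℝ A]
  refine cfc_congr fun x hx => mul_inv_cancel₀ (Real.sqrt_pos.2 ?_).ne'
  obtain ⟨i, rfl⟩ := hA.isHermitian.spectrum_real_eq_range_eigenvalues ▸ hx
  exact hA.eigenvalues_pos i

lemma Matrix.IsHermitian.cfc_eq_mul_diagonal_mul_conjTranspose {A : Matrix m m 𝕜}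
    (hA : A.IsHermitian) (f : ℝ → ℝ) :
    cfc f A = (hA.eigenvectorUnitary : Matrix m m 𝕜) *
      diagonal (RCLike.ofReal ∘ f ∘ hA.eigenvalues) * (hA.eigenvectorUnitary : Matrix m m 𝕜)ᴴ := by
  rw [hA.cfc_eq, IsHermitian.cfc, Unitary.conjStarAlgAut_apply, star_eq_conjTranspose]

end RCLike

lemma exists_geomMean_eq_conj_diagonal {n : ℕ} {A B : Matrix (Fin n) (Fin n) ℂ} (hA : A.PosDef)
    (hB : B.PosSemidef) :
    ∃ (M : Matrix (Fin n) (Fin n) ℂ) (e : Fin n → ℝ), (∀ p, 0 ≤ e p) ∧ A = M * Mᴴ ∧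
      B = M * diagonal (fun p => (e p : ℂ)) * Mᴴ ∧
      ∀ t, geomMean t A B = M * diagonal (fun p => ((e p ^ t : ℝ) : ℂ)) * Mᴴ := by
  set S := cfc Real.sqrt A
  set T := cfc (fun x : ℝ => (Real.sqrt x)⁻¹) A
  have hST : S * T = 1 := hA.cfc_sqrt_mul_cfc_inv_sqrt
  have hTS : T * S = 1 := mul_eq_one_comm.mp hST
  have hS : Sᴴ = S := (cfc_predicate (p := IsSelfAdjoint) Real.sqrt A).star_eq
  have hT : Tᴴ = T := (cfc_predicate (p := IsSelfAdjoint) _ A).star_eq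
  set W := T * B * T
  have hW : W.PosSemidef := by simpa only [hT] using hB.conjTranspose_mul_mul_same T
  set U := (hW.isHermitian.eigenvectorUnitary : Matrix (Fin n) (Fin n) ℂ)
  have hU : U * Uᴴ = 1 := by rw [← star_eq_conjTranspose]; exact Unitary.coe_mul_star_self _
  have hconj : ∀ D, S * (U * D * Uᴴ) * S = S * U * D * (S * U)ᴴ := fun D => by
    rw [conjTranspose_mul, hS]; simp only [mul_assoc]
  refine ⟨S * U, hW.isHermitian.eigenvalues, hW.eigenvalues_nonneg, ?_, ?_, fun t => ?_⟩
  · calc A = S * (U * 1 * Uᴴ) * S := by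
          rw [mul_one, hU, mul_one, hA.posSemidef.cfc_sqrt_mul_self]
      _ = _ := by rw [hconj, mul_one]
  · calc B = S * T * B * (T * S) := by rw [hST, hTS, one_mul, mul_one]
      _ = S * W * S := by simp only [W, mul_assoc]
      _ = _ := by
        conv_lhs => rw [← cfc_id ℝ W hW.isHermitian.isSelfAdjoint,
          hW.isHermitian.cfc_eq_mul_diagonal_mul_conjTranspose]
        exact hconj _
  · change S * cfc (fun x : ℝ => x ^ t) W * S = _
    rw [hW.isHermitian.cfc_eq_mul_diagonal_mul_conjTranspose]
    exact hconj _

lemma geomMean_hadamard_geomMean_le {n : ℕ} {A B C D : Matrix (Fin n) (Fin n) ℂ} (hA : A.PosDef)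
    (hB : B.PosSemidef) (hC : C.PosDef) (hD : D.PosSemidef) {μ : ℝ} (hμ₀ : 0 ≤ μ) (hμ₁ : μ ≤ 1) :
    geomMean μ A B ⊙ geomMean (1 - μ) C D ≤ μ • (B ⊙ C) + (1 - μ) • (A ⊙ D) := by
  obtain ⟨M, e, he, rfl, rfl, hG⟩ := exists_geomMean_eq_conj_diagonal hA hB
  obtain ⟨N, f, hf, rfl, rfl, hH⟩ := exists_geomMean_eq_conj_diagonal hC hD
  have hM : M * Mᴴ = M * diagonal (fun _ => 1) * Mᴴ := by rw [diagonal_one, mul_one]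
  have hN : N * Nᴴ = N * diagonal (fun _ => 1) * Nᴴ := by rw [diagonal_one, mul_one]
  rw [hG, hH, hM, hN]
  simp only [hadamard_conj_diagonal_eq_submatrix_kronecker]
  rw [le_iff]
  set d : Fin n × Fin n → ℝ := fun pq =>
    μ * e pq.1 + (1 - μ) * f pq.2 - e pq.1 ^ μ * f pq.2 ^ (1 - μ)
  have hd : ∀ pq, 0 ≤ d pq := fun pq => sub_nonneg.2 <|
    Real.geom_mean_le_arith_mean2_weighted hμ₀ (sub_nonneg.2 hμ₁) (he _) (hf _) (by ring)
  have hdiag : diagonal (fun pq : Fin n × Fin n => ((d pq : ℝ) : ℂ)) =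
      μ • diagonal (fun pq : Fin n × Fin n => (e pq.1 : ℂ) * 1) +
        (1 - μ) • diagonal (fun pq : Fin n × Fin n => 1 * (f pq.2 : ℂ)) -
        diagonal fun pq => ((e pq.1 ^ μ : ℝ) : ℂ) * ((f pq.2 ^ (1 - μ) : ℝ) : ℂ) := by
    ext i j
    rcases eq_or_ne i j with rfl | hij
    · simp [d, Complex.real_smul]
    · simp [hij]
  have hpsd := ((posSemidef_diagonal_iff.2 fun pq => Complex.zero_le_real.2 (hd pq))
    |>.mul_mul_conjTranspose_same (M ⊗ₖ N)).submatrix (fun i => (i, i))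
  rw [hdiag] at hpsd
  simp only [Matrix.mul_sub, Matrix.sub_mul, Matrix.mul_add, Matrix.add_mul, Matrix.mul_smul,
    Matrix.smul_mul, submatrix_add, submatrix_sub, submatrix_smul] at hpsd
  exact hpsd

lemma geomMean_hadamard_cross_le_of_le {n : ℕ} {A₁ B₁ A₂ B₂ : Matrix (Fin n) (Fin n) ℂ}
    (hA₁ : A₁.PosDef) (hB₁ : B₁.PosSemidef) (hA₂ : A₂.PosDef) (hB₂ : B₂.PosSemidef)
    (hA : A₁ ≤ A₂) (hB : B₁ ≤ B₂) {μ : ℝ} (hμ₀ : 0 ≤ μ) (hμ₁ : μ ≤ 1) :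
    geomMean μ A₁ B₁ ⊙ geomMean (1 - μ) A₂ B₂ + geomMean μ A₂ B₂ ⊙ geomMean (1 - μ) A₁ B₁ ≤
      A₁ ⊙ B₁ + A₂ ⊙ B₂ :=
  calc _ ≤ (μ • (B₁ ⊙ A₂) + (1 - μ) • (A₁ ⊙ B₂)) + (μ • (B₂ ⊙ A₁) + (1 - μ) • (A₂ ⊙ B₁)) :=
        add_le_add (geomMean_hadamard_geomMean_le hA₁ hB₁ hA₂ hB₂ hμ₀ hμ₁)
          (geomMean_hadamard_geomMean_le hA₂ hB₂ hA₁ hB₁ hμ₀ hμ₁)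
    _ ≤ _ + (A₂ - A₁) ⊙ (B₂ - B₁) :=
        le_add_of_nonneg_right ((le_iff.mp hA).hadamard (le_iff.mp hB)).nonneg
    _ = A₁ ⊙ B₁ + A₂ ⊙ B₂ := by
        ext i j
        simp only [Matrix.add_apply, Matrix.sub_apply, Matrix.smul_apply, hadamard_apply,
          Complex.real_smul, Complex.ofReal_sub, Complex.ofReal_one]
        ring

/-- If `0 < A_1 ≤ ⋯ ≤ A_n` and `0 < B_1 ≤ ⋯ ≤ B_n` are positive definite matrices and the
`ω_j` are positive weights, then for every `μ ∈ [0,1]`,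
`(∑ ω_j) • ∑ ω_j (A_j ∘ B_j) ≥ (∑ ω_j (A_j ♯_μ B_j)) ∘ (∑ ω_j (A_j ♯_{1-μ} B_j))`. -/
theorem chebyshev_hadamard_geomMean_discrete {n : ℕ}
    (A B : Fin n → Matrix (Fin n) (Fin n) ℂ)
    (hApos : ∀ j, (A j).PosDef) (hBpos : ∀ j, (B j).PosDef)
    (hAinc : ∀ i j : Fin n, i ≤ j → (A j - A i).PosSemidef)
    (hBinc : ∀ i j : Fin n, i ≤ j → (B j - B i).PosSemidef)
    (ω : Fin n → ℝ) (hω : ∀ j, 0 < ω j) (μ : ℝ) (hμ : μ ∈ Set.Icc (0 : ℝ) 1) :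
    ((∑ j, ω j) • ∑ j, ω j • (A j ⊙ B j) -
      (∑ j, ω j • geomMean μ (A j) (B j)) ⊙
        (∑ j, ω j • geomMean (1 - μ) (A j) (B j))).PosSemidef := by
  obtain ⟨hμ₀, hμ₁⟩ := hμ
  refine hadamard_sum_smul_le_of_pairwise ω (fun j => (hω j).le) _ _ _ fun j k hjk => ?_
  exact geomMean_hadamard_cross_le_of_le (hApos j) (hBpos j).posSemidef (hApos k)
    (hBpos k).posSemidef (hAinc j k hjk) (hBinc j k hjk) hμ₀ hμ₁
end

section
/- Let A_1 ≥ ⋯ ≥ A_k > 0 be positive definite n×n complex matrices (decreasing in the Loewner order), B_k ≥ ⋯ ≥ B_1 ≥ 0 be positive semidefinite n×n complex matrices (increasing in the Loewner order), and ω_1, …, ω_k be positive real numbers. Then (Σ_{j=1}^k ω_j) · (Σ_{j=1}^k ω_j tr(A_j^{-1} B_j)) ≥ (Σ_{j=1}^k ω_j (tr A_j)^{-1}) · (Σ_{j=1}^k ω_j tr(B_j)). -/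
open scoped ComplexOrder MatrixOrder

/-!
Every eigenvalue of `A > 0` lies in `(0, tr A]`, so every eigenvalue of `A⁻¹` is at least
`(tr A)⁻¹`, i.e. `(tr A)⁻¹ • 1 ≤ A⁻¹`; pairing with `B ≥ 0` gives `(tr A)⁻¹ tr B ≤ tr (A⁻¹ B)`.
The real sequences `(tr A_j)⁻¹` and `tr B_j` are both increasing, so the weighted Chebyshev sum
inequality bounds `(∑ ω_j (tr A_j)⁻¹) (∑ ω_j tr B_j)` by `(∑ ω_j) (∑ ω_j (tr A_j)⁻¹ tr B_j)`,
and the trace inequality finishes the proof.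
-/

open Finset in
theorem MonovaryOn.weighted_sum_mul_sum_le_sum_mul_sum {ι α : Type*} [CommRing α]
    [LinearOrder α] [IsStrictOrderedRing α] {s : Finset ι} {w f g : ι → α}
    (hw : ∀ i ∈ s, 0 ≤ w i) (hfg : MonovaryOn f g s) :
    (∑ i ∈ s, w i * f i) * (∑ i ∈ s, w i * g i) ≤
      (∑ i ∈ s, w i) * ∑ i ∈ s, w i * (f i * g i) := by
  have h_nonneg : 0 ≤ ∑ i ∈ s, ∑ j ∈ s, w i * w j * ((f j - f i) * (g j - g i)) :=
    sum_nonneg fun i hi ↦ sum_nonneg fun j hj ↦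
      mul_nonneg (mul_nonneg (hw i hi) (hw j hj)) (hfg.sub_mul_sub_nonneg hi hj)
  have h_expand : ∑ i ∈ s, ∑ j ∈ s, w i * w j * ((f j - f i) * (g j - g i)) =
      (∑ i ∈ s, w i) * (∑ i ∈ s, w i * (f i * g i)) +
        (∑ i ∈ s, w i * (f i * g i)) * (∑ i ∈ s, w i) -
        (∑ i ∈ s, w i * f i) * (∑ i ∈ s, w i * g i) -
        (∑ i ∈ s, w i * g i) * (∑ i ∈ s, w i * f i) := by
    simp only [sum_mul_sum, ← sum_add_distrib, ← sum_sub_distrib]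
    exact sum_congr rfl fun i _ ↦ sum_congr rfl fun j _ ↦ by ring
  linarith

namespace Matrix

variable {n 𝕜 : Type*} [Fintype n] [RCLike 𝕜]

lemma re_trace_le_re_trace {A A' : Matrix n n 𝕜} (h : A ≤ A') :
    RCLike.re A.trace ≤ RCLike.re A'.trace := by
  have := RCLike.re_le_re (le_iff.mp h).trace_nonneg
  rwa [trace_sub, map_sub, map_zero, sub_nonneg] at this

lemma PosDef.inv_re_trace_le_inv_re_trace {A A' : Matrix n n 𝕜} (hA : A.PosDef) (h : A ≤ A') :
    (RCLike.re A'.trace)⁻¹ ≤ (RCLike.re A.trace)⁻¹ := by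
  cases isEmpty_or_nonempty n
  · simp [trace]
  · exact inv_anti₀ (RCLike.pos_iff.mp hA.trace_pos).1 (re_trace_le_re_trace h)

variable [DecidableEq n]

lemma PosSemidef.trace_mul_nonneg {P Q : Matrix n n 𝕜} (hP : P.PosSemidef)
    (hQ : Q.PosSemidef) : 0 ≤ (P * Q).trace := by
  obtain ⟨C, rfl⟩ := CStarAlgebra.nonneg_iff_eq_star_mul_self.mp hP.nonneg
  rw [mul_assoc, trace_mul_comm, star_eq_conjTranspose]
  exact (hQ.mul_mul_conjTranspose_same C).trace_nonneg

lemma PosSemidef.le_re_trace_of_mem_spectrum {A : Matrix n n 𝕜} (hA : A.PosSemidef) {x : ℝ}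
    (hx : x ∈ spectrum ℝ A) : x ≤ RCLike.re A.trace := by
  obtain ⟨i, rfl⟩ := hA.isHermitian.spectrum_real_eq_range_eigenvalues ▸ hx
  rw [hA.isHermitian.trace_eq_sum_eigenvalues, ← RCLike.ofReal_sum, RCLike.ofReal_re]
  exact Finset.single_le_sum (fun j _ ↦ hA.eigenvalues_nonneg j) (Finset.mem_univ i)

lemma PosDef.inv_re_trace_le_of_mem_spectrum_inv {A : Matrix n n 𝕜} (hA : A.PosDef) {x : ℝ}
    (hx : x ∈ spectrum ℝ A⁻¹) : (RCLike.re A.trace)⁻¹ ≤ x := by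
  have hx_pos : 0 < x := by
    obtain ⟨i, rfl⟩ := hA.inv.isHermitian.spectrum_real_eq_range_eigenvalues ▸ hx
    exact hA.inv.eigenvalues_pos i
  have hx_inv : x⁻¹ ∈ spectrum ℝ A := by
    rwa [← hA.isUnit.unit_spec, spectrum.inv₀_mem_iff, coe_units_inv, hA.isUnit.unit_spec]
  simpa using inv_anti₀ (inv_pos.mpr hx_pos) (hA.posSemidef.le_re_trace_of_mem_spectrum hx_inv)

lemma PosDef.algebraMap_inv_re_trace_le_inv {A : Matrix n n 𝕜} (hA : A.PosDef) :
    algebraMap ℝ (Matrix n n 𝕜) (RCLike.re A.trace)⁻¹ ≤ A⁻¹ :=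
  (algebraMap_le_iff_le_spectrum hA.inv.isHermitian).mpr fun _ ↦
    hA.inv_re_trace_le_of_mem_spectrum_inv

lemma PosDef.inv_re_trace_mul_re_trace_le {A B : Matrix n n 𝕜} (hA : A.PosDef)
    (hB : B.PosSemidef) :
    (RCLike.re A.trace)⁻¹ * RCLike.re B.trace ≤ RCLike.re (A⁻¹ * B).trace := by
  have h := (le_iff.mp hA.algebraMap_inv_re_trace_le_inv).trace_mul_nonneg hB
  rw [sub_mul, trace_sub, Algebra.algebraMap_eq_smul_one, smul_mul_assoc, one_mul, trace_smul,
    sub_nonneg] at h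
  simpa [RCLike.smul_re] using RCLike.re_le_re h

end Matrix

/-- Trace version of the Chebyshev inequality: for positive definite matrices
`A_1 ≥ ⋯ ≥ A_k > 0` (decreasing), positive semidefinite matrices `B_k ≥ ⋯ ≥ B_1 ≥ 0`
(increasing) and positive weights `ω_j`,
`(∑ ω_j) · (∑ ω_j tr(A_j⁻¹ B_j)) ≥ (∑ ω_j (tr A_j)⁻¹) · (∑ ω_j tr B_j)`. -/
theorem chebyshev_trace {n k : ℕ} (A B : Fin k → Matrix (Fin n) (Fin n) ℂ)
    (hApos : ∀ j, (A j).PosDef) (hBpos : ∀ j, (B j).PosSemidef)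
    (hAdec : ∀ i j : Fin k, i ≤ j → (A i - A j).PosSemidef)
    (hBinc : ∀ i j : Fin k, i ≤ j → (B j - B i).PosSemidef)
    (ω : Fin k → ℝ) (hω : ∀ j, 0 < ω j) :
    (∑ j, ((ω j : ℝ) : ℂ)) * (∑ j, ((ω j : ℝ) : ℂ) * ((A j)⁻¹ * B j).trace) ≥
      (∑ j, ((ω j : ℝ) : ℂ) * ((A j).trace)⁻¹) * (∑ j, ((ω j : ℝ) : ℂ) * (B j).trace) := by
  have h_mono : Monovary (fun j ↦ ((A j).trace.re)⁻¹) (fun j ↦ (B j).trace.re) :=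
    Monotone.monovary (fun i j hij ↦ (hApos j).inv_re_trace_le_inv_re_trace (hAdec i j hij))
      (fun i j hij ↦ Matrix.re_trace_le_re_trace (hBinc i j hij))
  have h_cheb := (h_mono.monovaryOn _).weighted_sum_mul_sum_le_sum_mul_sum
    (s := Finset.univ) (w := ω) fun j _ ↦ (hω j).le
  have h_real : (∑ j, ω j * ((A j).trace.re)⁻¹) * (∑ j, ω j * (B j).trace.re) ≤
      (∑ j, ω j) * ∑ j, ω j * ((A j)⁻¹ * B j).trace.re :=
    h_cheb.trans <| mul_le_mul_of_nonneg_left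
      (Finset.sum_le_sum fun j _ ↦ mul_le_mul_of_nonneg_left
        ((hApos j).inv_re_trace_mul_re_trace_le (hBpos j)) (hω j).le)
      (Finset.sum_nonneg fun j _ ↦ (hω j).le)
  have h_ofReal_re {z : ℂ} (hz : 0 ≤ z) : (z.re : ℂ) = z :=
    (Complex.eq_re_of_ofReal_le (r := 0) (by rwa [Complex.ofReal_zero])).symm
  have h_complex := Complex.real_le_real.mpr h_real
  push_cast at h_complex
  simp only [h_ofReal_re (hApos _).posSemidef.trace_nonneg, h_ofReal_re (hBpos _).trace_nonneg,
    h_ofReal_re ((hApos _).inv.posSemidef.trace_mul_nonneg (hBpos _))] at h_complex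
  exact h_complex
end

section
/- Let 𝒜 be a unital C*-algebra, τ₁ and τ₂ be states on 𝒜, J ⊆ ℝ be an interval, and f, g : J → ℝ be continuous synchronous functions. Then for all self-adjoint elements A, B of 𝒜 whose spectra are contained in J, τ₁(f(A)g(A)) + τ₂(f(B)g(B)) ≥ τ₁(f(A))τ₂(g(B)) + τ₂(f(B))τ₁(g(A)) (all quantities here are real numbers). -/
open scoped ComplexOrder

/-- Chebyshev inequality for two states on a unital C*-algebra and synchronous functions:
`τ₁(f(A)g(A)) + τ₂(f(B)g(B)) ≥ τ₁(f(A))τ₂(g(B)) + τ₂(f(B))τ₁(g(A))`. -/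
theorem chebyshev_states {𝒜 : Type*} [CStarAlgebra 𝒜] [PartialOrder 𝒜] [StarOrderedRing 𝒜]
    (τ₁ τ₂ : 𝒜 →ₗ[ℂ] ℂ) (hτ₁one : τ₁ 1 = 1) (hτ₂one : τ₂ 1 = 1)
    (hτ₁pos : ∀ a : 𝒜, 0 ≤ a → 0 ≤ τ₁ a) (hτ₂pos : ∀ a : 𝒜, 0 ≤ a → 0 ≤ τ₂ a)
    (J : Set ℝ) (hJ : J.OrdConnected) (f g : ℝ → ℝ)
    (hfc : ContinuousOn f J) (hgc : ContinuousOn g J)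
    (hsync : ∀ s ∈ J, ∀ t ∈ J, 0 ≤ (f t - f s) * (g t - g s))
    (A B : 𝒜) (hA : IsSelfAdjoint A) (hB : IsSelfAdjoint B)
    (hAJ : spectrum ℝ A ⊆ J) (hBJ : spectrum ℝ B ⊆ J) :
    (τ₁ (cfc f A * cfc g A)).re + (τ₂ (cfc f B * cfc g B)).re ≥
      (τ₁ (cfc f A)).re * (τ₂ (cfc g B)).re + (τ₂ (cfc f B)).re * (τ₁ (cfc g A)).re := by
  have hfA : ContinuousOn f (spectrum ℝ A) := hfc.mono hAJ
  have hgA : ContinuousOn g (spectrum ℝ A) := hgc.mono hAJ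
  have hfB : ContinuousOn f (spectrum ℝ B) := hfc.mono hBJ
  have hgB : ContinuousOn g (spectrum ℝ B) := hgc.mono hBJ
  set a : ℝ := (τ₁ (cfc f A)).re with ha
  set b : ℝ := (τ₁ (cfc g A)).re with hb
  set C : ℝ := (τ₁ (cfc f A * cfc g A)).re with hC
  -- real part of τ applied to real smul
  have hre : ∀ (τ : 𝒜 →ₗ[ℂ] ℂ) (r : ℝ) (x : 𝒜), (τ (r • x)).re = r * (τ x).re := by
    intro τ r x
    rw [← algebraMap_smul ℂ r x, map_smul]
    simp
  have key : ∀ t ∈ J, 0 ≤ C + f t * g t - a * g t - b * f t := by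
    intro t ht
    have h1 : 0 ≤ cfc (fun s => (f s - f t) * (g s - g t)) A :=
      cfc_nonneg (fun s hs => hsync t ht s (hAJ hs))
    have h2 : cfc (fun s => (f s - f t) * (g s - g t)) A
        = cfc f A * cfc g A - g t • cfc f A - f t • cfc g A + (f t * g t) • (1 : 𝒜) := by
      have : (fun s => (f s - f t) * (g s - g t))
          = fun s => (f s * g s - g t * f s - f t * g s + (fun _ => f t * g t) s) := by
        funext s; ring
      rw [this, cfc_add (a := A) _ _ (by fun_prop) (by fun_prop),
        cfc_sub _ _ A (by fun_prop) (by fun_prop),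
        cfc_sub _ _ A (by fun_prop) (by fun_prop),
        cfc_mul _ _ A hfA hgA, cfc_const_mul _ _ A hfA, cfc_const_mul _ _ A hgA,
        cfc_const _ A hA, Algebra.algebraMap_eq_smul_one]
    have h3 := hτ₁pos _ h1
    rw [h2] at h3
    have h4 : 0 ≤ (τ₁ (cfc f A * cfc g A - g t • cfc f A - f t • cfc g A
        + (f t * g t) • (1 : 𝒜))).re := by
      rw [Complex.le_def] at h3; simpa using h3.1
    rw [map_add, map_sub, map_sub] at h4
    simp only [Complex.add_re, Complex.sub_re, hre, hτ₁one] at h4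
    simp only [Complex.one_re, mul_one] at h4
    linarith
  -- now apply to B
  set φ : ℝ → ℝ := fun t => C + f t * g t - a * g t - b * f t with hφ
  have h1 : 0 ≤ cfc φ B := cfc_nonneg (fun t ht => key t (hBJ ht))
  have h2 : cfc φ B = C • (1 : 𝒜) + cfc f B * cfc g B - a • cfc g B - b • cfc f B := by
    have : φ = fun t => ((fun _ => C) t + f t * g t - a * g t - b * f t) := rfl
    rw [this, cfc_sub _ _ B (by fun_prop) (by fun_prop),
      cfc_sub _ _ B (by fun_prop) (by fun_prop),
      cfc_add (a := B) _ _ (by fun_prop) (by fun_prop),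
      cfc_mul _ _ B hfB hgB, cfc_const_mul _ _ B hgB, cfc_const_mul _ _ B hfB,
      cfc_const _ B hB, Algebra.algebraMap_eq_smul_one]
  have h3 := hτ₂pos _ h1
  rw [h2] at h3
  have h4 : 0 ≤ (τ₂ (C • (1 : 𝒜) + cfc f B * cfc g B - a • cfc g B - b • cfc f B)).re := by
    rw [Complex.le_def] at h3; simpa using h3.1
  rw [map_sub, map_sub, map_add] at h4
  simp only [Complex.add_re, Complex.sub_re, hre, hτ₂one, Complex.one_re, mul_one] at h4
  linarith
end

section
/- Let τ be a state on the C*-algebra B(ℋ) of bounded linear operators on a complex Hilbert space ℋ, and let p, q > 0. Then for all positive operators A, B ∈ B(ℋ), τ(A^{p+q}) + τ(B^{p+q}) ≥ τ(A^p)τ(B^q) + τ(B^p)τ(A^q), where powers are taken by the continuous functional calculus. -/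
open scoped ComplexOrder

private lemma rpow_cont {r : ℝ} (hr : 0 < r) : Continuous (fun x : ℝ => x ^ r) :=
  Real.continuous_rpow_const hr.le

/-- Scalar Chebyshev-type inequality. -/
private lemma scalar_ineq {p q : ℝ} (hp : 0 < p) (hq : 0 < q) {x y : ℝ}
    (hx : 0 ≤ x) (hy : 0 ≤ y) :
    0 ≤ y ^ (p + q) + x ^ (p + q) - y ^ p * x ^ q - y ^ q * x ^ p := by
  have key : 0 ≤ (x ^ p - y ^ p) * (x ^ q - y ^ q) := by
    rcases le_total x y with h | h
    · have h1 : x ^ p ≤ y ^ p := Real.rpow_le_rpow hx h hp.le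
      have h2 : x ^ q ≤ y ^ q := Real.rpow_le_rpow hx h hq.le
      nlinarith
    · have h1 : y ^ p ≤ x ^ p := Real.rpow_le_rpow hy h hp.le
      have h2 : y ^ q ≤ x ^ q := Real.rpow_le_rpow hy h hq.le
      exact mul_nonneg (by linarith) (by linarith)
  have hxpq : x ^ (p + q) = x ^ p * x ^ q := Real.rpow_add' hx (by positivity)
  have hypq : y ^ (p + q) = y ^ p * y ^ q := Real.rpow_add' hy (by positivity)
  nlinarith [key]

/-- Key step: a positivity statement for states applied to functional calculus combos. -/
private lemma step {H : Type*} [NormedAddCommGroup H] [InnerProductSpace ℂ H]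
    [CompleteSpace H] (τ : (H →L[ℂ] H) →ₗ[ℂ] ℂ)
    (hτpos : ∀ T : H →L[ℂ] H, 0 ≤ T → 0 ≤ τ T)
    (p q : ℝ) (hp : 0 < p) (hq : 0 < q) (a : H →L[ℂ] H) (ha : 0 ≤ a)
    (u v w : ℝ)
    (h : ∀ x : ℝ, 0 ≤ x → 0 ≤ u + x ^ (p + q) - v * x ^ q - w * x ^ p) :
    0 ≤ u * (τ 1).re + (τ (cfc (fun x : ℝ => x ^ (p + q)) a)).re
        - v * (τ (cfc (fun x : ℝ => x ^ q) a)).re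
        - w * (τ (cfc (fun x : ℝ => x ^ p) a)).re := by
  have hsa : IsSelfAdjoint a := ha.isSelfAdjoint
  have hcpq : ContinuousOn (fun x : ℝ => x ^ (p + q)) (spectrum ℝ a) :=
    (rpow_cont (by positivity)).continuousOn
  have hcq : ContinuousOn (fun x : ℝ => v * x ^ q) (spectrum ℝ a) :=
    (continuous_const.mul (rpow_cont hq)).continuousOn
  have hcp : ContinuousOn (fun x : ℝ => w * x ^ p) (spectrum ℝ a) :=
    (continuous_const.mul (rpow_cont hp)).continuousOn
  have h2 : cfc (fun x : ℝ => u + x ^ (p + q) - v * x ^ q - w * x ^ p) a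
      = u • (1 : H →L[ℂ] H) + cfc (fun x : ℝ => x ^ (p + q)) a
        - v • cfc (fun x : ℝ => x ^ q) a - w • cfc (fun x : ℝ => x ^ p) a := by
    have e1 : u • (1 : H →L[ℂ] H) = cfc (fun _ : ℝ => u) a := by
      rw [cfc_const u a hsa, Algebra.algebraMap_eq_smul_one]
    rw [e1, ← cfc_smul v (fun x : ℝ => x ^ q) a ((rpow_cont hq).continuousOn),
      ← cfc_smul w (fun x : ℝ => x ^ p) a ((rpow_cont hp).continuousOn)]
    simp only [smul_eq_mul]
    rw [← cfc_add a _ _ continuousOn_const hcpq,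
      ← cfc_sub (fun x : ℝ => u + x ^ (p + q)) _ a (continuousOn_const.add hcpq) hcq,
      ← cfc_sub (fun x : ℝ => u + x ^ (p + q) - v * x ^ q) _ a
        ((continuousOn_const.add hcpq).sub hcq) hcp]
  have h1 : 0 ≤ cfc (fun x : ℝ => u + x ^ (p + q) - v * x ^ q - w * x ^ p) a :=
    cfc_nonneg fun x hx => h x (spectrum_nonneg_of_nonneg ha hx)
  have h3 := hτpos _ h1
  rw [h2] at h3
  have h4 : (τ (u • (1 : H →L[ℂ] H) + cfc (fun x : ℝ => x ^ (p + q)) a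
      - v • cfc (fun x : ℝ => x ^ q) a - w • cfc (fun x : ℝ => x ^ p) a)).re
      = u * (τ 1).re + (τ (cfc (fun x : ℝ => x ^ (p + q)) a)).re
        - v * (τ (cfc (fun x : ℝ => x ^ q) a)).re
        - w * (τ (cfc (fun x : ℝ => x ^ p) a)).re := by
    rw [map_sub, map_sub, map_add, τ.map_smul_of_tower, τ.map_smul_of_tower, τ.map_smul_of_tower]
    simp [Complex.real_smul, Complex.mul_re]
  rw [Complex.le_def] at h3
  rw [← h4]
  simpa using h3.1

/-- For a state `τ` on `B(ℋ)`, positive operators `A, B` and `p, q > 0`,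
`τ(A^{p+q}) + τ(B^{p+q}) ≥ τ(A^p)τ(B^q) + τ(B^p)τ(A^q)`. -/
theorem chebyshev_state_rpow {H : Type*} [NormedAddCommGroup H] [InnerProductSpace ℂ H]
    [CompleteSpace H] (τ : (H →L[ℂ] H) →ₗ[ℂ] ℂ) (hτone : τ 1 = 1)
    (hτpos : ∀ T : H →L[ℂ] H, 0 ≤ T → 0 ≤ τ T)
    (p q : ℝ) (hp : 0 < p) (hq : 0 < q) (A B : H →L[ℂ] H) (hA : 0 ≤ A) (hB : 0 ≤ B) :
    (τ (cfc (fun x : ℝ => x ^ (p + q)) A)).re + (τ (cfc (fun x : ℝ => x ^ (p + q)) B)).re ≥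
      (τ (cfc (fun x : ℝ => x ^ p) A)).re * (τ (cfc (fun x : ℝ => x ^ q) B)).re +
      (τ (cfc (fun x : ℝ => x ^ p) B)).re * (τ (cfc (fun x : ℝ => x ^ q) A)).re := by
  have hone : (τ 1).re = 1 := by rw [hτone]; simp
  -- first application: for each y ≥ 0
  have hAstep : ∀ y : ℝ, 0 ≤ y →
      0 ≤ (τ (cfc (fun x : ℝ => x ^ (p + q)) A)).re + y ^ (p + q)
        - (τ (cfc (fun x : ℝ => x ^ q) A)).re * y ^ p
        - (τ (cfc (fun x : ℝ => x ^ p) A)).re * y ^ q := by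
    intro y hy
    have := step τ hτpos p q hp hq A hA (y ^ (p + q)) (y ^ p) (y ^ q)
      (fun x hx => by have := scalar_ineq hp hq hx hy; linarith)
    rw [hone] at this
    linarith
  have := step τ hτpos p q hp hq B hB
    ((τ (cfc (fun x : ℝ => x ^ (p + q)) A)).re)
    ((τ (cfc (fun x : ℝ => x ^ p) A)).re)
    ((τ (cfc (fun x : ℝ => x ^ q) A)).re)
    (fun y hy => by have := hAstep y hy; linarith)
  rw [hone] at this
  linarith
end

section
/- Let J ⊆ ℝ be an interval, f, g : J → ℝ be continuous synchronous functions, and A, B be Hermitian n×n complex matrices with spectra contained in J. Then tr(f(A)g(A) + f(B)g(B)) ≥ (1/n)·(tr(f(A)) tr(g(B)) + tr(g(A)) tr(f(B))). -/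
/-!
Diagonalising, the traces become sums over the eigenvalues `αᵢ` of `A` and `βⱼ` of `B`, and the
inequality is the sum over all pairs `(i, j)` of
`f αᵢ g βⱼ + g αᵢ f βⱼ ≤ f αᵢ g αᵢ + f βⱼ g βⱼ`, which is synchronicity at `(αᵢ, βⱼ)`.
-/

open Finset

namespace Matrix.IsHermitian

variable {n 𝕜 : Type*} [Fintype n] [DecidableEq n] [RCLike 𝕜] {A : Matrix n n 𝕜}

lemma trace_cfc (hA : A.IsHermitian) (f : ℝ → ℝ) :
    (cfc f A).trace = ((∑ i, f (hA.eigenvalues i) : ℝ) : 𝕜) := by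
  rw [hA.cfc_eq, IsHermitian.cfc, Unitary.conjStarAlgAut_apply, trace_mul_cycle,
    Unitary.coe_star_mul_self, one_mul, trace_diagonal]
  simp

lemma cfc_mul_cfc (f g : ℝ → ℝ) : cfc f A * cfc g A = cfc (fun x ↦ f x * g x) A :=
  (cfc_mul f g A (A.finite_real_spectrum.continuousOn f)
    (A.finite_real_spectrum.continuousOn g)).symm

end Matrix.IsHermitian

lemma sum_mul_sum_add_sum_mul_sum_le_of_synchronous {ι κ : Type*} [Fintype ι] [Fintype κ]
    (a b : ι → ℝ) (c d : κ → ℝ) (h : ∀ i j, 0 ≤ (c j - a i) * (d j - b i)) :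
    (∑ i, a i) * (∑ j, d j) + (∑ i, b i) * (∑ j, c j) ≤
      Fintype.card κ * ∑ i, a i * b i + Fintype.card ι * ∑ j, c j * d j :=
  calc (∑ i, a i) * (∑ j, d j) + (∑ i, b i) * (∑ j, c j)
      = ∑ i, ∑ j, (a i * d j + b i * c j) := by
        simp only [sum_mul_sum, ← sum_add_distrib]
    _ ≤ ∑ i, ∑ j, (a i * b i + c j * d j) :=
        sum_le_sum fun i _ ↦ sum_le_sum fun j _ ↦ by nlinarith [h i j]
    _ = Fintype.card κ * ∑ i, a i * b i + Fintype.card ι * ∑ j, c j * d j := by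
        simp only [sum_add_distrib, sum_const, card_univ, nsmul_eq_mul, mul_sum]

theorem chebyshev_trace_sync_general {n : ℕ} (J : Set ℝ)
    (f g : ℝ → ℝ)
    (hsync : ∀ s ∈ J, ∀ t ∈ J, 0 ≤ (f t - f s) * (g t - g s))
    (A B : Matrix (Fin n) (Fin n) ℂ) (hA : A.IsHermitian) (hB : B.IsHermitian)
    (hAJ : spectrum ℝ A ⊆ J) (hBJ : spectrum ℝ B ⊆ J) :
    ((cfc f A * cfc g A + cfc f B * cfc g B).trace).re ≥
      (1 / (n : ℝ)) * (((cfc f A).trace).re * ((cfc g B).trace).re +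
        ((cfc g A).trace).re * ((cfc f B).trace).re) := by
  obtain rfl | hn := n.eq_zero_or_pos
  · simp
  simp only [Matrix.IsHermitian.cfc_mul_cfc, Matrix.trace_add, hA.trace_cfc, hB.trace_cfc,
    ← RCLike.re_to_complex, map_add, RCLike.ofReal_re]
  have key := sum_mul_sum_add_sum_mul_sum_le_of_synchronous
    (fun i ↦ f (hA.eigenvalues i)) (fun i ↦ g (hA.eigenvalues i))
    (fun j ↦ f (hB.eigenvalues j)) (fun j ↦ g (hB.eigenvalues j))
    fun i j ↦ hsync _ (hAJ (hA.eigenvalues_mem_spectrum_real i))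
      _ (hBJ (hB.eigenvalues_mem_spectrum_real j))
  simp only [Fintype.card_fin, ← mul_add] at key
  rw [ge_iff_le, one_div, inv_mul_le_iff₀ (by exact_mod_cast hn)]
  exact key

/-- Trace Chebyshev inequality for synchronous functions of Hermitian matrices:
`tr(f(A)g(A) + f(B)g(B)) ≥ (1/n)(tr f(A) tr g(B) + tr g(A) tr f(B))`. -/
theorem chebyshev_trace_sync {n : ℕ} (hn : 0 < n) (J : Set ℝ) (hJ : J.OrdConnected)
    (f g : ℝ → ℝ) (hfc : ContinuousOn f J) (hgc : ContinuousOn g J)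
    (hsync : ∀ s ∈ J, ∀ t ∈ J, 0 ≤ (f t - f s) * (g t - g s))
    (A B : Matrix (Fin n) (Fin n) ℂ) (hA : A.IsHermitian) (hB : B.IsHermitian)
    (hAJ : spectrum ℝ A ⊆ J) (hBJ : spectrum ℝ B ⊆ J) :
    ((cfc f A * cfc g A + cfc f B * cfc g B).trace).re ≥
      (1 / (n : ℝ)) * (((cfc f A).trace).re * ((cfc g B).trace).re +
        ((cfc g A).trace).re * ((cfc f B).trace).re) :=
  chebyshev_trace_sync_general J f g hsync A B hA hB hAJ hBJ
end

section
/- Let 𝒜 be a unital C*-algebra, τ be a state on 𝒜, J ⊆ ℝ be an interval, and f, g : J → ℝ be continuous synchronous functions. Then for every self-adjoint element A of 𝒜 with spectrum contained in J, τ(f(A)g(A)) ≥ τ(f(A))·τ(g(A)). -/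
/-!
Write `a = Re τ(f(A))`, `b = Re τ(g(A))` and `c = Re τ(f(A)g(A))`. For `s` in the spectrum,
`(f(A) - f(s))(g(A) - g(s))` is the functional calculus of a function that is nonnegative on the
spectrum by synchrony, so applying `τ` gives `(f(s) - a)(g(s) - b) ≥ ab - c`. Hence
`(f(A) - a)(g(A) - b) ≥ (ab - c) • 1`, and applying `τ` once more gives `c - ab ≥ ab - c`.
-/

open scoped ComplexOrder

lemma re_map_sub_algebraMap_mul_sub_algebraMap {𝒜 : Type*} [Ring 𝒜] [Algebra ℂ 𝒜]
    (τ : 𝒜 →ₗ[ℂ] ℂ) (hτone : τ 1 = 1) (F G : 𝒜) (x y : ℝ) :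
    (τ ((F - algebraMap ℝ 𝒜 x) * (G - algebraMap ℝ 𝒜 y))).re
      = (τ (F * G)).re - y * (τ F).re - x * (τ G).re + x * y := by
  simp only [Algebra.algebraMap_eq_smul_one, sub_mul, mul_sub, mul_smul_comm, smul_mul_assoc,
    mul_one, one_mul, map_sub, τ.map_smul_of_tower, hτone, Complex.sub_re, Complex.real_smul,
    Complex.mul_re, Complex.ofReal_re, Complex.ofReal_im]
  ring

section CStarAlgebra

variable {𝒜 : Type*} [CStarAlgebra 𝒜] (τ : 𝒜 →ₗ[ℂ] ℂ) {A : 𝒜}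

lemma re_map_cfc_sub_mul_sub (hτone : τ 1 = 1) (hA : IsSelfAdjoint A) {f g : ℝ → ℝ}
    (hf : ContinuousOn f (spectrum ℝ A)) (hg : ContinuousOn g (spectrum ℝ A)) (x y : ℝ) :
    (τ (cfc (fun t => (f t - x) * (g t - y)) A)).re
      = (τ (cfc f A * cfc g A)).re - y * (τ (cfc f A)).re - x * (τ (cfc g A)).re + x * y := by
  rw [cfc_mul (fun t => f t - x) (fun t => g t - y) A, cfc_sub f _ A, cfc_sub g _ A,
    cfc_const x A, cfc_const y A, re_map_sub_algebraMap_mul_sub_algebraMap τ hτone]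

lemma le_re_map_cfc [PartialOrder 𝒜] [StarOrderedRing 𝒜] (hτone : τ 1 = 1)
    (hτpos : ∀ a : 𝒜, 0 ≤ a → 0 ≤ τ a) (hA : IsSelfAdjoint A) (φ : ℝ → ℝ)
    (hφ : ContinuousOn φ (spectrum ℝ A)) {c : ℝ} (h : ∀ t ∈ spectrum ℝ A, c ≤ φ t) :
    c ≤ (τ (cfc φ A)).re := by
  have hle : 0 ≤ τ (cfc φ A - algebraMap ℝ 𝒜 c) :=
    hτpos _ (sub_nonneg.mpr (algebraMap_le_cfc φ c A h))
  rw [map_sub, Algebra.algebraMap_eq_smul_one, τ.map_smul_of_tower, hτone] at hle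
  simpa using (Complex.le_def.mp hle).1

end CStarAlgebra

theorem chebyshev_state_sync_general {𝒜 : Type*} [CStarAlgebra 𝒜] [PartialOrder 𝒜]
    [StarOrderedRing 𝒜] (τ : 𝒜 →ₗ[ℂ] ℂ) (hτone : τ 1 = 1)
    (hτpos : ∀ a : 𝒜, 0 ≤ a → 0 ≤ τ a)
    (J : Set ℝ) (f g : ℝ → ℝ)
    (hfc : ContinuousOn f J) (hgc : ContinuousOn g J)
    (hsync : ∀ s ∈ J, ∀ t ∈ J, 0 ≤ (f t - f s) * (g t - g s))
    (A : 𝒜) (hA : IsSelfAdjoint A) (hAJ : spectrum ℝ A ⊆ J) :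
    (τ (cfc f A * cfc g A)).re ≥ (τ (cfc f A)).re * (τ (cfc g A)).re := by
  have hf := hfc.mono hAJ
  have hg := hgc.mono hAJ
  have hexpand := re_map_cfc_sub_mul_sub τ hτone hA hf hg
  set a := (τ (cfc f A)).re
  set b := (τ (cfc g A)).re
  have hpointwise : ∀ s ∈ spectrum ℝ A,
      a * b - (τ (cfc f A * cfc g A)).re ≤ (f s - a) * (g s - b) := by
    intro s hs
    have hsync_s := le_re_map_cfc τ hτone hτpos hA (fun t => (f t - f s) * (g t - g s))
      (by fun_prop) fun t ht => hsync s (hAJ hs) t (hAJ ht)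
    rw [hexpand] at hsync_s
    linarith
  have hcov := le_re_map_cfc τ hτone hτpos hA (fun t => (f t - a) * (g t - b)) (by fun_prop)
    hpointwise
  rw [hexpand] at hcov
  linarith

/-- Chebyshev inequality for a state on a unital C*-algebra and synchronous functions:
`τ(f(A)g(A)) ≥ τ(f(A))τ(g(A))`. -/
theorem chebyshev_state_sync {𝒜 : Type*} [CStarAlgebra 𝒜] [PartialOrder 𝒜]
    [StarOrderedRing 𝒜] (τ : 𝒜 →ₗ[ℂ] ℂ) (hτone : τ 1 = 1)
    (hτpos : ∀ a : 𝒜, 0 ≤ a → 0 ≤ τ a)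
    (J : Set ℝ) (hJ : J.OrdConnected) (f g : ℝ → ℝ)
    (hfc : ContinuousOn f J) (hgc : ContinuousOn g J)
    (hsync : ∀ s ∈ J, ∀ t ∈ J, 0 ≤ (f t - f s) * (g t - g s))
    (A : 𝒜) (hA : IsSelfAdjoint A) (hAJ : spectrum ℝ A ⊆ J) :
    (τ (cfc f A * cfc g A)).re ≥ (τ (cfc f A)).re * (τ (cfc g A)).re :=
  chebyshev_state_sync_general τ hτone hτpos J f g hfc hgc hsync A hA hAJ
end

section
/- Let J ⊆ ℝ be an interval and f, g : J → ℝ be continuous synchronous functions. Then for all bounded self-adjoint operators A, B on a complex Hilbert space ℋ with spectra contained in J and all unit vectors x, y ∈ ℋ, ⟨f(A)g(A)x, x⟩ + ⟨f(B)g(B)y, y⟩ ≥ ⟨f(A)x, x⟩⟨g(B)y, y⟩ + ⟨f(B)y, y⟩⟨g(A)x, x⟩ (all inner products here are real numbers). -/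
/-!
For a state `ω` and `t ∈ J`, synchronicity makes `(f s - f t) * (g s - g t)` nonnegative on the
spectrum of `a`, so `ω ((f(a) - f t) * (g(a) - g t)) ≥ 0`; expanded, this says that
`Cov_ω(f(a), g(a)) + (ω f(a) - f t) * (ω g(a) - g t) ≥ 0` for every `t ∈ J`. This is a lower bound
for a function of `t` on the spectrum of `b`, so a second state `ω'` evaluated at that function
of `b` gives `Cov_ω + Cov_ω' + (ω f(a) - ω' f(b)) * (ω g(a) - ω' g(b)) ≥ 0`, which expands to the
inequality. Vector states `T ↦ re ⟪T x, x⟫` of unit vectors are states on `H →L[ℂ] H`.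
-/

section CFC

variable {R A : Type*} {p : A → Prop} [CommRing R] [StarRing R] [MetricSpace R]
  [IsTopologicalRing R] [ContinuousStar R] [TopologicalSpace A] [Ring A] [StarRing A]
  [Algebra R A] [ContinuousFunctionalCalculus R A p]

lemma cfc_sub_const (r : R) (f : R → R) (a : A)
    (hf : ContinuousOn f (spectrum R a) := by cfc_cont_tac) (ha : p a := by cfc_tac) :
    cfc (fun x => f x - r) a = cfc f a - algebraMap R A r := by
  simpa [← sub_eq_add_neg] using cfc_add_const (-r) f a

lemma cfc_sub_const_mul_sub_const (r s : R) (f g : R → R) (a : A)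
    (hf : ContinuousOn f (spectrum R a) := by cfc_cont_tac)
    (hg : ContinuousOn g (spectrum R a) := by cfc_cont_tac) (ha : p a := by cfc_tac) :
    cfc (fun x => (f x - r) * (g x - s)) a =
      (cfc f a - algebraMap R A r) * (cfc g a - algebraMap R A s) := by
  rw [cfc_mul (fun x => f x - r) (fun x => g x - s) a, cfc_sub_const r f a, cfc_sub_const s g a]

end CFC

lemma map_sub_algebraMap_mul_sub_algebraMap {R A F : Type*} [CommRing R] [Ring A]
    [Algebra R A] [FunLike F A R] [LinearMapClass F R A R] (ω : F) (hω : ω 1 = 1)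
    (x y : A) (r s : R) :
    ω ((x - algebraMap R A r) * (y - algebraMap R A s)) =
      (ω (x * y) - ω x * ω y) + (ω x - r) * (ω y - s) := by
  simp only [Algebra.algebraMap_eq_smul_one, sub_mul, mul_sub, smul_mul_assoc, mul_smul_comm,
    one_mul, mul_one, map_sub, map_smul, hω, smul_eq_mul]
  ring

section Chebyshev

variable {A : Type*} [TopologicalSpace A] [Ring A] [StarRing A] [PartialOrder A]
  [StarOrderedRing A] [Algebra ℝ A] [ContinuousFunctionalCalculus ℝ A IsSelfAdjoint]

lemma PositiveLinearMap.le_map_cfc (ω : A →ₚ[ℝ] ℝ) (hω : ω 1 = 1) {φ : ℝ → ℝ} {a : A} {c : ℝ}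
    (hφ : ∀ t ∈ spectrum ℝ a, c ≤ φ t) (hφc : ContinuousOn φ (spectrum ℝ a) := by cfc_cont_tac)
    (ha : IsSelfAdjoint a := by cfc_tac) : c ≤ ω (cfc φ a) := by
  calc c = ω (algebraMap ℝ A c) := by simp [Algebra.algebraMap_eq_smul_one, hω]
    _ ≤ ω (cfc φ a) := OrderHomClass.mono ω (algebraMap_le_cfc φ c a hφ)

variable {J : Set ℝ} {f g : ℝ → ℝ} {a b : A}

/-- This is `ω ((f(a) - f t) * (g(a) - g t)) ≥ 0` in expanded form. -/
lemma PositiveLinearMap.covariance_add_nonneg_of_synchronous (ω : A →ₚ[ℝ] ℝ) (hω : ω 1 = 1)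
    (hfc : ContinuousOn f J) (hgc : ContinuousOn g J)
    (hsync : ∀ s ∈ J, ∀ t ∈ J, 0 ≤ (f t - f s) * (g t - g s))
    (ha : IsSelfAdjoint a) (haJ : spectrum ℝ a ⊆ J) {t : ℝ} (ht : t ∈ J) :
    0 ≤ (ω (cfc f a * cfc g a) - ω (cfc f a) * ω (cfc g a)) +
      (ω (cfc f a) - f t) * (ω (cfc g a) - g t) := by
  have hfa := hfc.mono haJ
  have hga := hgc.mono haJ
  have h := ω.map_nonneg (cfc_nonneg fun s hs => hsync t ht s (haJ hs))
  rwa [cfc_sub_const_mul_sub_const (f t) (g t) f g a,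
    map_sub_algebraMap_mul_sub_algebraMap ω hω] at h

theorem PositiveLinearMap.chebyshev_of_synchronous (ω₁ ω₂ : A →ₚ[ℝ] ℝ) (hω₁ : ω₁ 1 = 1)
    (hω₂ : ω₂ 1 = 1) (hfc : ContinuousOn f J) (hgc : ContinuousOn g J)
    (hsync : ∀ s ∈ J, ∀ t ∈ J, 0 ≤ (f t - f s) * (g t - g s))
    (ha : IsSelfAdjoint a) (hb : IsSelfAdjoint b)
    (haJ : spectrum ℝ a ⊆ J) (hbJ : spectrum ℝ b ⊆ J) :
    ω₁ (cfc f a) * ω₂ (cfc g b) + ω₂ (cfc f b) * ω₁ (cfc g a) ≤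
      ω₁ (cfc f a * cfc g a) + ω₂ (cfc f b * cfc g b) := by
  set mf := ω₁ (cfc f a)
  set mg := ω₁ (cfc g a)
  set cov := ω₁ (cfc f a * cfc g a) - mf * mg
  have hfb := hfc.mono hbJ
  have hgb := hgc.mono hbJ
  have hlower : ∀ t ∈ spectrum ℝ b, -cov ≤ (f t - mf) * (g t - mg) := fun t ht => by
    have := ω₁.covariance_add_nonneg_of_synchronous hω₁ hfc hgc hsync ha haJ (hbJ ht)
    linarith
  have key := ω₂.le_map_cfc hω₂ hlower
  rw [cfc_sub_const_mul_sub_const mf mg f g b,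
    map_sub_algebraMap_mul_sub_algebraMap ω₂ hω₂] at key
  linear_combination key

end Chebyshev

section VectorState

variable {H : Type*} [NormedAddCommGroup H] [InnerProductSpace ℂ H]

noncomputable def vectorState (x : H) : (H →L[ℂ] H) →ₚ[ℝ] ℝ where
  toFun T := (inner ℂ (T x) x).re
  map_add' S T := by simp
  map_smul' r T := by simp
  monotone' S T hST := by
    have := ((ContinuousLinearMap.le_def S T).mp hST).re_inner_nonneg_left x
    simpa [inner_sub_left] using this

@[simp]
lemma vectorState_apply (x : H) (T : H →L[ℂ] H) : vectorState x T = (inner ℂ (T x) x).re := rfl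

lemma vectorState_one {x : H} (hx : ‖x‖ = 1) : vectorState x 1 = 1 := by
  simp [inner_self_eq_norm_sq_to_K, hx]

end VectorState

theorem chebyshev_inner_sync_general {H : Type*} [NormedAddCommGroup H] [InnerProductSpace ℂ H]
    [CompleteSpace H] (J : Set ℝ) (f g : ℝ → ℝ)
    (hfc : ContinuousOn f J) (hgc : ContinuousOn g J)
    (hsync : ∀ s ∈ J, ∀ t ∈ J, 0 ≤ (f t - f s) * (g t - g s))
    (A B : H →L[ℂ] H) (hA : IsSelfAdjoint A) (hB : IsSelfAdjoint B)
    (hAJ : spectrum ℝ A ⊆ J) (hBJ : spectrum ℝ B ⊆ J)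
    (x y : H) (hx : ‖x‖ = 1) (hy : ‖y‖ = 1) :
    (inner ℂ ((cfc f A * cfc g A) x) x : ℂ).re + (inner ℂ ((cfc f B * cfc g B) y) y : ℂ).re ≥
      (inner ℂ (cfc f A x) x : ℂ).re * (inner ℂ (cfc g B y) y : ℂ).re +
      (inner ℂ (cfc f B y) y : ℂ).re * (inner ℂ (cfc g A x) x : ℂ).re :=
  (vectorState x).chebyshev_of_synchronous (vectorState y) (vectorState_one hx)
    (vectorState_one hy) hfc hgc hsync hA hB hAJ hBJ

/-- Chebyshev inequality for vector states and synchronous functions of bounded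
self-adjoint operators on a Hilbert space:
`⟨f(A)g(A)x, x⟩ + ⟨f(B)g(B)y, y⟩ ≥ ⟨f(A)x, x⟩⟨g(B)y, y⟩ + ⟨f(B)y, y⟩⟨g(A)x, x⟩`. -/
theorem chebyshev_inner_sync {H : Type*} [NormedAddCommGroup H] [InnerProductSpace ℂ H]
    [CompleteSpace H] (J : Set ℝ) (hJ : J.OrdConnected) (f g : ℝ → ℝ)
    (hfc : ContinuousOn f J) (hgc : ContinuousOn g J)
    (hsync : ∀ s ∈ J, ∀ t ∈ J, 0 ≤ (f t - f s) * (g t - g s))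
    (A B : H →L[ℂ] H) (hA : IsSelfAdjoint A) (hB : IsSelfAdjoint B)
    (hAJ : spectrum ℝ A ⊆ J) (hBJ : spectrum ℝ B ⊆ J)
    (x y : H) (hx : ‖x‖ = 1) (hy : ‖y‖ = 1) :
    (inner ℂ ((cfc f A * cfc g A) x) x : ℂ).re + (inner ℂ ((cfc f B * cfc g B) y) y : ℂ).re ≥
      (inner ℂ (cfc f A x) x : ℂ).re * (inner ℂ (cfc g B y) y : ℂ).re +
      (inner ℂ (cfc f B y) y : ℂ).re * (inner ℂ (cfc g A x) x : ℂ).re :=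
  chebyshev_inner_sync_general J f g hfc hgc hsync A B hA hB hAJ hBJ x y hx hy
end

section
/- Let 𝒜 be a unital C*-algebra, τ be a state on 𝒜, and f, g : ℝ → ℝ be continuous synchronous functions. Then for all self-adjoint elements A, B of 𝒜, τ(f(B)g(B)) − τ(f(B))·τ(g(B)) ≥ (τ(f(B)) − f(τ(A)))·(g(τ(A)) − τ(g(B))), where τ(A) denotes the (real) value of the state τ at the self-adjoint element A. -/
open scoped ComplexOrder

/-- Chebyshev type inequality for a state and synchronous functions on `ℝ`:
`τ(f(B)g(B)) − τ(f(B))τ(g(B)) ≥ (τ(f(B)) − f(τ(A)))(g(τ(A)) − τ(g(B)))`. -/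
theorem chebyshev_state_covariance {𝒜 : Type*} [CStarAlgebra 𝒜] [PartialOrder 𝒜]
    [StarOrderedRing 𝒜] (τ : 𝒜 →ₗ[ℂ] ℂ) (hτone : τ 1 = 1)
    (hτpos : ∀ a : 𝒜, 0 ≤ a → 0 ≤ τ a)
    (f g : ℝ → ℝ) (hfc : Continuous f) (hgc : Continuous g)
    (hsync : ∀ s t : ℝ, 0 ≤ (f t - f s) * (g t - g s))
    (A B : 𝒜) (hA : IsSelfAdjoint A) (hB : IsSelfAdjoint B) :
    (τ (cfc f B * cfc g B)).re - (τ (cfc f B)).re * (τ (cfc g B)).re ≥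
      ((τ (cfc f B)).re - f ((τ A).re)) * (g ((τ A).re) - (τ (cfc g B)).re) := by
  set x := (τ A).re with hx
  have hnn : (0:𝒜) ≤ cfc (fun t => (f t - f x) * (g t - g x)) B :=
    cfc_nonneg fun t ht => hsync x t
  have hkey : (0:ℂ) ≤ τ (cfc (fun t => (f t - f x) * (g t - g x)) B) := hτpos _ hnn
  have hexp : cfc (fun t => (f t - f x) * (g t - g x)) B
      = cfc f B * cfc g B - ((g x : ℂ)) • cfc f B - ((f x : ℂ)) • cfc g B
        + ((f x : ℂ) * (g x : ℂ)) • (1 : 𝒜) := by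
    rw [cfc_mul _ _ B (by fun_prop) (by fun_prop),
      cfc_sub _ _ B (by fun_prop) (by fun_prop),
      cfc_sub _ _ B (by fun_prop) (by fun_prop),
      cfc_const (f x) B, cfc_const (g x) B]
    rw [Algebra.algebraMap_eq_smul_one, Algebra.algebraMap_eq_smul_one]
    rw [← Complex.coe_smul, ← Complex.coe_smul]
    simp only [sub_mul, mul_sub, smul_mul_assoc, mul_smul_comm, one_mul, mul_one, smul_smul]
    module
  rw [hexp] at hkey
  simp only [map_add, map_sub, map_smul, hτone, smul_eq_mul, mul_one] at hkey
  rw [Complex.le_def] at hkey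
  obtain ⟨hre, -⟩ := hkey
  simp only [Complex.sub_re, Complex.add_re, Complex.zero_re, Complex.mul_re,
    Complex.ofReal_re, Complex.ofReal_im, zero_mul, sub_zero, mul_zero] at hre
  nlinarith [hre]
end

section
/- Let 𝒜 be a unital C*-algebra, τ be a state on 𝒜, and f, g : [0, ∞) → ℝ be continuous functions such that 0 ≤ f(x) ≤ α and 0 ≤ g(x) ≤ β for all x ≥ 0, where α, β are nonnegative real numbers. Then for all positive elements A, B of 𝒜, αβ − τ(f(B)g(B)) ≥ (α − τ(f(B)))·(β − τ(g(A))). -/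
open scoped ComplexOrder

/-- An Aczél–Chebyshev type inequality: if `0 ≤ f ≤ α` and `0 ≤ g ≤ β` on `[0, ∞)`, then for
all positive elements `A, B` of a unital C*-algebra and any state `τ`,
`αβ − τ(f(B)g(B)) ≥ (α − τ(f(B)))(β − τ(g(A)))`. -/
theorem chebyshev_aczel {𝒜 : Type*} [CStarAlgebra 𝒜] [PartialOrder 𝒜]
    [StarOrderedRing 𝒜] (τ : 𝒜 →ₗ[ℂ] ℂ) (hτone : τ 1 = 1)
    (hτpos : ∀ a : 𝒜, 0 ≤ a → 0 ≤ τ a)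
    (f g : ℝ → ℝ) (hfc : ContinuousOn f (Set.Ici 0)) (hgc : ContinuousOn g (Set.Ici 0))
    (α β : ℝ) (hα : 0 ≤ α) (hβ : 0 ≤ β)
    (hf : ∀ x : ℝ, 0 ≤ x → 0 ≤ f x ∧ f x ≤ α) (hg : ∀ x : ℝ, 0 ≤ x → 0 ≤ g x ∧ g x ≤ β)
    (A B : 𝒜) (hA : 0 ≤ A) (hB : 0 ≤ B) :
    α * β - (τ (cfc f B * cfc g B)).re ≥
      (α - (τ (cfc f B)).re) * (β - (τ (cfc g A)).re) := by
  have hsA : ∀ x ∈ spectrum ℝ A, (0:ℝ) ≤ x := fun x hx => spectrum_nonneg_of_nonneg hA hx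
  have hsB : ∀ x ∈ spectrum ℝ B, (0:ℝ) ≤ x := fun x hx => spectrum_nonneg_of_nonneg hB hx
  have hfcB : ContinuousOn f (spectrum ℝ B) := hfc.mono hsB
  have hgcB : ContinuousOn g (spectrum ℝ B) := hgc.mono hsB
  have hgcA : ContinuousOn g (spectrum ℝ A) := hgc.mono hsA
  -- τ respects order on the real parts
  have hmono : ∀ x y : 𝒜, x ≤ y → (τ x).re ≤ (τ y).re := by
    intro x y hxy
    have h := hτpos (y - x) (sub_nonneg.2 hxy)
    rw [map_sub] at h
    have := (Complex.le_def.mp h).1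
    simpa using this
  -- τ of the scalar α
  have hconst : ∀ (r : ℝ) (C : 𝒜), 0 ≤ C → (τ (cfc (fun _ => r) C)).re = r := by
    intro r C hC
    rw [cfc_const r C hC.isSelfAdjoint]
    have : algebraMap ℝ 𝒜 r = algebraMap ℂ 𝒜 (r : ℂ) := by
      rw [IsScalarTower.algebraMap_apply ℝ ℂ 𝒜]; norm_num
    rw [this, Algebra.algebraMap_eq_smul_one, map_smul, hτone]
    simp
  have ha0 : 0 ≤ (τ (cfc f B)).re := by
    have := hmono 0 _ (cfc_nonneg (fun x hx => (hf x (hsB x hx)).1) (a := B))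
    simpa using this
  have haα : (τ (cfc f B)).re ≤ α := by
    have := hmono _ _ (cfc_mono (fun x hx => (hf x (hsB x hx)).2) (a := B) hfcB (by fun_prop))
    rwa [hconst α B hB] at this
  have hb0 : 0 ≤ (τ (cfc g A)).re := by
    have := hmono 0 _ (cfc_nonneg (fun x hx => (hg x (hsA x hx)).1) (a := A))
    simpa using this
  have hbβ : (τ (cfc g A)).re ≤ β := by
    have := hmono _ _ (cfc_mono (fun x hx => (hg x (hsA x hx)).2) (a := A) hgcA (by fun_prop))
    rwa [hconst β A hA] at this
  -- key: f(B)g(B) ≤ β • f(B)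
  have hkey : (τ (cfc f B * cfc g B)).re ≤ β * (τ (cfc f B)).re := by
    have h1 : cfc f B * cfc g B = cfc (fun x => f x * g x) B := (cfc_mul f g B hfcB hgcB).symm
    have h2 : cfc (fun x => f x * g x) B ≤ cfc (fun x => β * f x) B := by
      refine cfc_mono (fun x hx => ?_) (by fun_prop) (by fun_prop)
      have hx0 := hsB x hx
      have := (hg x hx0).2
      nlinarith [(hf x hx0).1]
    have h3 : cfc (fun x => β * f x) B = β • cfc f B := cfc_const_mul β f B hfcB
    have := hmono _ _ (h1 ▸ h2)
    rw [h3] at this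
    have hsmul : τ (β • cfc f B) = (β : ℂ) * τ (cfc f B) := by
      rw [← Complex.coe_smul, map_smul, smul_eq_mul]
    rw [hsmul] at this
    simpa using this
  nlinarith [hkey, ha0, haα, hb0, hbβ]
end

section
/- Let f, g : [0, ∞) → [0, ∞) be continuous synchronous functions and A, B be positive semidefinite n×n complex matrices. Then for every j with 1 ≤ j ≤ n, f(s_j(A))·g(s_j(A)) + s_j(f(B)g(B)) ≥ f(s_j(A))·s_n(g(B)) + s_j(f(B))·g(s_j(A)). -/
open scoped ComplexOrder

/-- `sVal A j` is the `j`-th largest singular value (1-indexed) of the matrix `A`, i.e. the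
`j`-th largest eigenvalue of `|A| = (AᴴA)^{1/2}`. -/
noncomputable def sVal {n : ℕ} (A : Matrix (Fin n) (Fin n) ℂ) (j : ℕ) : ℝ :=
  ((Finset.univ.val.map fun i =>
      Real.sqrt ((Matrix.isHermitian_conjTranspose_mul_self A).eigenvalues i)).sort
    (· ≥ ·)).getD (j - 1) 0

/-!
Let `λ_i` be the eigenvalues of `B` and `a = s_j(A) ≥ 0`. The singular values of `f(B)`, `g(B)`
and `f(B)g(B)` are the decreasing rearrangements of `f(λ_i)`, `g(λ_i)` and `f(λ_i)g(λ_i)`.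
Synchronicity gives `f(λ)g(λ) ≥ f(a)g(λ) + f(λ)g(a) - f(a)g(a)`, and for each of the at least
`j` eigenvalues with `f(λ) ≥ s_j(f(B))` the right side is at least
`f(a)s_n(g(B)) + s_j(f(B))g(a) - f(a)g(a)`. So at least `j` of the products `f(λ_i)g(λ_i)`
exceed this bound, which therefore bounds `s_j(f(B)g(B))` from below.
-/

namespace List

variable {α : Type*} [LinearOrder α]

theorem SortedGE.le_getElem_iff {l : List α} (hl : l.SortedGE) {k : ℕ} (hk : k < l.length)
    (c : α) : c ≤ l[k] ↔ k + 1 ≤ l.countP (c ≤ ·) := by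
  constructor
  · intro hc
    have htake : (l.take (k + 1)).countP (c ≤ ·) = k + 1 := by
      rw [countP_eq_length.mpr, length_take_of_le hk]
      intro x hx
      obtain ⟨i, hi, rfl⟩ := mem_take_iff_getElem.mp hx
      simpa using hc.trans (hl.getElem_ge_getElem_of_le (by omega))
    calc k + 1 = (l.take (k + 1)).countP (c ≤ ·) := htake.symm
      _ ≤ l.countP (c ≤ ·) := (take_sublist _ _).countP_le
  · intro hcount
    by_contra! hc
    have hdrop : (l.drop k).countP (c ≤ ·) = 0 := by
      rw [countP_eq_zero]
      intro x hx
      obtain ⟨i, hi, rfl⟩ := mem_iff_getElem.mp hx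
      rw [getElem_drop]
      simpa using (hl.getElem_ge_getElem_of_le (Nat.le_add_right k i)).trans_lt hc
    have := countP_append (l₁ := l.take k) (l₂ := l.drop k) (p := (c ≤ ·))
    rw [take_append_drop, hdrop] at this
    have := (l.take k).countP_le_length (p := (c ≤ ·))
    have := l.length_take_le k
    omega

end List

namespace Multiset

variable {α : Type*}

theorem countP_mono_left {p q : α → Prop} [DecidablePred p] [DecidablePred q] {s : Multiset α}
    (h : ∀ x ∈ s, p x → q x) : s.countP p ≤ s.countP q := by
  induction s using Quot.inductionOn
  simpa using List.countP_mono_left (by simpa using h)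

variable [LinearOrder α] [Zero α]

/-- Indexed from `1`; the value is `0` for `k = 0` and for `k > card m`. -/
def kthLargest (m : Multiset α) (k : ℕ) : α := (m.sort (· ≥ ·)).getD (k - 1) 0

theorem kthLargest_nonneg {m : Multiset α} (hm : ∀ x ∈ m, 0 ≤ x) (k : ℕ) :
    0 ≤ m.kthLargest k := by
  unfold kthLargest
  by_cases hk : k - 1 < (m.sort (· ≥ ·)).length
  · rw [List.getD_eq_getElem _ _ hk]
    exact hm _ ((mem_sort _).mp (List.getElem_mem hk))
  · rw [List.getD_eq_default _ _ (not_lt.mp hk)]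

theorem le_kthLargest_iff {m : Multiset α} {k : ℕ} (hk1 : 1 ≤ k) (hk : k ≤ card m) (c : α) :
    c ≤ m.kthLargest k ↔ k ≤ m.countP (c ≤ ·) := by
  have hlen : k - 1 < (m.sort (· ≥ ·)).length := by rw [length_sort]; omega
  conv_rhs => rw [← sort_eq m (· ≥ ·), coe_countP]
  rw [kthLargest, List.getD_eq_getElem _ _ hlen,
    (pairwise_sort m (· ≥ ·)).sortedGE.le_getElem_iff hlen, Nat.sub_add_cancel hk1]

theorem kthLargest_card_le {m : Multiset α} {x : α} (hx : x ∈ m) :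
    m.kthLargest (card m) ≤ x := by
  have hpos : 1 ≤ card m := card_pos_iff_exists_mem.mpr ⟨x, hx⟩
  have hall := (le_kthLargest_iff hpos le_rfl _).mp le_rfl
  exact countP_eq_card.mp (hall.antisymm' (countP_le_card _ _)) x hx

theorem kthLargest_map_mul_ge {ι : Type*} (s : Multiset ι) (f g : ι → ℝ) {u w : ℝ}
    (hu : 0 ≤ u) (hw : 0 ≤ w) (hsync : ∀ b ∈ s, 0 ≤ (f b - u) * (g b - w))
    {k : ℕ} (hk1 : 1 ≤ k) (hk : k ≤ card s) :
    u * (s.map g).kthLargest (card s) + (s.map f).kthLargest k * w - u * w ≤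
      (s.map fun b => f b * g b).kthLargest k := by
  set v := (s.map f).kthLargest k
  set μ := (s.map g).kthLargest (card s)
  have hf : k ≤ s.countP (v ≤ f ·) := by
    simpa [countP_map, ← countP_eq_card_filter] using
      (le_kthLargest_iff hk1 (by rwa [card_map]) v).mp le_rfl
  rw [le_kthLargest_iff hk1 (by rwa [card_map]), countP_map, ← countP_eq_card_filter]
  refine hf.trans (countP_mono_left fun b hb hvb => ?_)
  have hμ : μ ≤ g b := by simpa [μ] using kthLargest_card_le (mem_map_of_mem g hb)
  nlinarith [hsync b hb, mul_le_mul_of_nonneg_left hμ hu, mul_le_mul_of_nonneg_right hvb hw]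

end Multiset

open Matrix

theorem Matrix.IsHermitian.map_eigenvalues_of_eq_cfc {𝕜 n : Type*} [RCLike 𝕜] [Fintype n]
    [DecidableEq n] {A M : Matrix n n 𝕜} (hA : A.IsHermitian) (hM : M.IsHermitian)
    {f : ℝ → ℝ} (h : M = cfc f A) :
    Finset.univ.val.map hM.eigenvalues = (Finset.univ.val.map hA.eigenvalues).map f := by
  apply Multiset.map_injective (RCLike.ofReal_injective (K := 𝕜))
  rw [Multiset.map_map, ← hM.roots_charpoly_eq_eigenvalues, h, hA.charpoly_cfc_eq,
    Finset.prod_eq_multiset_prod]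
  have := Polynomial.roots_multiset_prod_X_sub_C
    (Finset.univ.val.map fun i => (f (hA.eigenvalues i) : 𝕜))
  simp only [Multiset.map_map] at this ⊢
  exact this

theorem sVal_nonneg {n : ℕ} (A : Matrix (Fin n) (Fin n) ℂ) (j : ℕ) : 0 ≤ sVal A j :=
  Multiset.kthLargest_nonneg (by simp [Real.sqrt_nonneg]) j

theorem sVal_cfc {n : ℕ} {B : Matrix (Fin n) (Fin n) ℂ} (hB : B.IsHermitian) (p : ℝ → ℝ)
    (hp : ∀ i, 0 ≤ p (hB.eigenvalues i)) (k : ℕ) :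
    sVal (cfc p B) k = ((Finset.univ.val.map hB.eigenvalues).map p).kthLargest k := by
  have hsq : (cfc p B)ᴴ * cfc p B = cfc (fun x => p x * p x) B := by
    rw [← star_eq_conjTranspose, (cfc_predicate p B).star_eq,
      cfc_mul p p B (finite_real_spectrum.continuousOn p) (finite_real_spectrum.continuousOn p)]
  rw [sVal, ← Multiset.kthLargest]
  congr 1
  calc _ = (Finset.univ.val.map (isHermitian_conjTranspose_mul_self (cfc p B)).eigenvalues).map
          Real.sqrt := (Multiset.map_map _ _ _).symm
    _ = ((Finset.univ.val.map hB.eigenvalues).map fun x => p x * p x).map Real.sqrt := by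
      rw [hB.map_eigenvalues_of_eq_cfc _ hsq]
    _ = (Finset.univ.val.map hB.eigenvalues).map p := by
      simp only [Multiset.map_map]
      exact Multiset.map_congr rfl fun i _ => Real.sqrt_mul_self (hp i)

theorem chebyshev_singularValues'_general {n : ℕ} (f g : ℝ → ℝ)
    (hf0 : ∀ x : ℝ, 0 ≤ x → 0 ≤ f x) (hg0 : ∀ x : ℝ, 0 ≤ x → 0 ≤ g x)
    (hsync : ∀ s ∈ Set.Ici (0 : ℝ), ∀ t ∈ Set.Ici (0 : ℝ), 0 ≤ (f t - f s) * (g t - g s))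
    (A B : Matrix (Fin n) (Fin n) ℂ) (hB : B.PosSemidef)
    (j : ℕ) (hj1 : 1 ≤ j) (hjn : j ≤ n) :
    f (sVal A j) * g (sVal A j) + sVal (cfc f B * cfc g B) j ≥
      f (sVal A j) * sVal (cfc g B) n + sVal (cfc f B) j * g (sVal A j) := by
  set a := sVal A j
  have ha : 0 ≤ a := sVal_nonneg A j
  have heig : ∀ i, 0 ≤ hB.isHermitian.eigenvalues i := hB.eigenvalues_nonneg
  set s := Finset.univ.val.map hB.isHermitian.eigenvalues
  have hcard : Multiset.card s = n := by simp [s]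
  have key := Multiset.kthLargest_map_mul_ge s f g (hf0 a ha) (hg0 a ha)
    (fun b hb => hsync a ha b (by obtain ⟨i, -, rfl⟩ := Multiset.mem_map.mp hb; exact heig i))
    hj1 (hcard ▸ hjn)
  rw [← cfc_mul f g B (finite_real_spectrum.continuousOn f) (finite_real_spectrum.continuousOn g),
    sVal_cfc hB.isHermitian (fun x => f x * g x)
      fun i => mul_nonneg (hf0 _ (heig i)) (hg0 _ (heig i)),
    sVal_cfc hB.isHermitian f fun i => hf0 _ (heig i),
    sVal_cfc hB.isHermitian g fun i => hg0 _ (heig i)]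
  rw [hcard] at key
  linarith

/-- Chebyshev type inequality for singular values: for synchronous `f, g : [0,∞) → [0,∞)`
and positive semidefinite matrices `A, B`,
`f(s_j(A))g(s_j(A)) + s_j(f(B)g(B)) ≥ f(s_j(A))s_n(g(B)) + s_j(f(B))g(s_j(A))`. -/
theorem chebyshev_singularValues' {n : ℕ} (f g : ℝ → ℝ)
    (hfc : ContinuousOn f (Set.Ici 0)) (hgc : ContinuousOn g (Set.Ici 0))
    (hf0 : ∀ x : ℝ, 0 ≤ x → 0 ≤ f x) (hg0 : ∀ x : ℝ, 0 ≤ x → 0 ≤ g x)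
    (hsync : ∀ s ∈ Set.Ici (0 : ℝ), ∀ t ∈ Set.Ici (0 : ℝ), 0 ≤ (f t - f s) * (g t - g s))
    (A B : Matrix (Fin n) (Fin n) ℂ) (hA : A.PosSemidef) (hB : B.PosSemidef)
    (j : ℕ) (hj1 : 1 ≤ j) (hjn : j ≤ n) :
    f (sVal A j) * g (sVal A j) + sVal (cfc f B * cfc g B) j ≥
      f (sVal A j) * sVal (cfc g B) n + sVal (cfc f B) j * g (sVal A j) :=
  chebyshev_singularValues'_general f g hf0 hg0 hsync A B hB j hj1 hjn
end
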